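/- arXiv:2102.03431 — 3 statements merged into one kernel-verified Lean document; each statement's English description precedes it below -/
import Mathlib

section
/- Let n ≥ 4, F ⊆ {1,…,n}, and a ∈ (ℤ/2ℤ)^F, and suppose that either 1 ∉ F, or 1 ∈ F and a_1 = 1. Then J_n ∩ G(n,F,a) = ker M_𝔼 ∩ ker M_𝕆. -/
noncomputable section

open MvPolynomial Finset

/-- Bit strings of length `n` with coordinate sum zero (the index set `G_n`). -/
abbrev Gn (n : ℕ) : Type := {g : Fin n → ZMod 2 // ∑ i, g i = 0}

/-- The polynomial ring `R_n = ℂ[q_g : g ∈ G_n]`. -/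
abbrev Rn (n : ℕ) : Type := MvPolynomial (Gn n) ℂ

/-- The parameter polynomial ring, with variables `a^i_g = X (i, g)`. -/
abbrev Sn : Type := MvPolynomial (ℕ × ZMod 2) ℂ

/-- The partial sum `g_1 + ⋯ + g_j` (with `j` 1-based). -/
def psum1 {n : ℕ} (g : Fin n → ZMod 2) (j : ℕ) : ZMod 2 :=
  ∑ i ∈ univ.filter fun i : Fin n => (i : ℕ) < j, g i

/-- The partial sum `g_2 + ⋯ + g_j` (with `j` 1-based). -/
def psum2 {n : ℕ} (g : Fin n → ZMod 2) (j : ℕ) : ZMod 2 :=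
  ∑ i ∈ univ.filter fun i : Fin n => 0 < (i : ℕ) ∧ (i : ℕ) < j, g i

/-- The leaf-edge monomial `a^1_{g_1} ⋯ a^n_{g_n}`. -/
def leafMonom {n : ℕ} (g : Fin n → ZMod 2) : Sn :=
  ∏ j : Fin n, X ((j : ℕ) + 1, g j)

/-- `ψ_{T_0}(q_g) = (∏_{j=1}^n a^j_{g_j}) ∏_{j=1}^{n-1} a^{n+j}_{g_1+⋯+g_j}`. -/
def tree0Monom {n : ℕ} (g : Fin n → ZMod 2) : Sn :=
  leafMonom g * ∏ j ∈ Icc 1 (n - 1), X (n + j, psum1 g j)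

/-- `ψ_{T_1}(q_g) = (∏_{j=1}^n a^j_{g_j}) ∏_{j=2}^{n} a^{n+j}_{g_2+⋯+g_j}`. -/
def tree1Monom {n : ℕ} (g : Fin n → ZMod 2) : Sn :=
  leafMonom g * ∏ j ∈ Icc 2 n, X (n + j, psum2 g j)

/-- The parameterization of the first underlying tree of the `n`-sunlet. -/
def ψtree0 (n : ℕ) : Rn n →ₐ[ℂ] Sn := aeval fun g => tree0Monom g.1

/-- The parameterization of the second underlying tree of the `n`-sunlet. -/
def ψtree1 (n : ℕ) : Rn n →ₐ[ℂ] Sn := aeval fun g => tree1Monom g.1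

/-- The `n`-sunlet parameterization `ψ_n`. -/
def ψsunlet (n : ℕ) : Rn n →ₐ[ℂ] Sn := aeval fun g => tree0Monom g.1 + tree1Monom g.1

/-- The `n`-sunlet ideal `J_n = ker ψ_n`. -/
def Jsunlet (n : ℕ) : Ideal (Rn n) := RingHom.ker (ψsunlet n)

/-- The tree ideal `I_{T_0}`. -/
def Itree0 (n : ℕ) : Ideal (Rn n) := RingHom.ker (ψtree0 n)

/-- The tree ideal `I_{T_1}`. -/
def Itree1 (n : ℕ) : Ideal (Rn n) := RingHom.ker (ψtree1 n)

/-- The condition for `q_g q_h` to be a spanning monomial of the glove `G(n,F,a)`: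
`g` and `h` agree with `a` on `F`, and `g_i + h_i = 1` off `F`. -/
def GlovePair {n : ℕ} (F : Finset (Fin n)) (a : Fin n → ZMod 2) (g h : Gn n) : Prop :=
  (∀ i ∈ F, g.1 i = a i) ∧ (∀ i ∈ F, h.1 i = a i) ∧ ∀ i ∉ F, g.1 i + h.1 i = 1

instance {n : ℕ} (F : Finset (Fin n)) (a : Fin n → ZMod 2) (g h : Gn n) :
    Decidable (GlovePair F a g h) := by unfold GlovePair; infer_instance

/-- The glove `G(n,F,a)`, as a `ℂ`-subspace of `R_n`. -/
def glove {n : ℕ} (F : Finset (Fin n)) (a : Fin n → ZMod 2) : Submodule ℂ (Rn n) :=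
  Submodule.span ℂ {p | ∃ g h : Gn n, GlovePair F a g h ∧ p = X g * X h}

/-- Strict lexicographic order on bit strings. -/
def lexLt {n : ℕ} (g h : Fin n → ZMod 2) : Prop :=
  ∃ i : Fin n, (∀ j : Fin n, j < i → g j = h j) ∧ (g i).val < (h i).val

instance {n : ℕ} (g h : Fin n → ZMod 2) : Decidable (lexLt g h) := by
  unfold lexLt; infer_instance

/-- Non-strict lexicographic order on bit strings. -/
def lexLe {n : ℕ} (g h : Fin n → ZMod 2) : Prop := g = h ∨ lexLt g h

instance {n : ℕ} (g h : Fin n → ZMod 2) : Decidable (lexLe g h) := by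
  unfold lexLe; infer_instance

/-- Membership in `L(n,F,a)`: `g` is the lexicographically smaller index of a
spanning monomial `q_g q_h` of the glove `G(n,F,a)`. -/
def Lmem {n : ℕ} (F : Finset (Fin n)) (a : Fin n → ZMod 2) (g : Gn n) : Prop :=
  ∃ h : Gn n, GlovePair F a g h ∧ lexLe g.1 h.1

instance {n : ℕ} (F : Finset (Fin n)) (a : Fin n → ZMod 2) (g : Gn n) :
    Decidable (Lmem F a g) := by unfold Lmem; infer_instance

/-- The cardinality of `{1,…,j} ∖ F` (1-based `j`). -/
def cardInit {n : ℕ} (F : Finset (Fin n)) (j : ℕ) : ℕ :=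
  ((univ.filter fun i : Fin n => (i : ℕ) < j) \ F).card

/-- `𝔼(n,F) = {j : 2 ≤ j ≤ n-1, |{1,…,j} ∖ F| even}`. -/
def Eset (n : ℕ) (F : Finset (Fin n)) : Finset ℕ :=
  (Icc 2 (n - 1)).filter fun j => Even (cardInit F j)

/-- `𝕆(n,F) = {j : 2 ≤ j ≤ n-1, |{1,…,j} ∖ F| odd}`. -/
def Oset (n : ℕ) (F : Finset (Fin n)) : Finset ℕ :=
  (Icc 2 (n - 1)).filter fun j => Odd (cardInit F j)

/-- The general element of the glove `G(n,F,a)` with coefficient `c g` on the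
spanning monomial `q_g q_h` (where `g` is lexicographically smaller than `h`). -/
def gloveElt {n : ℕ} (F : Finset (Fin n)) (a : Fin n → ZMod 2) (c : Gn n → ℂ) : Rn n :=
  ∑ g : Gn n, ∑ h : Gn n,
    (if GlovePair F a g h ∧ lexLe g.1 h.1 then c g else 0) • (X g * X h : Rn n)

/-- `M_𝔼` vanishes on the glove element with coefficients `c`: each coordinate of the
image (indexed by an 𝔼-coloring) is the sum of the coefficients of the spanning
monomials with that 𝔼-coloring. -/
def MEkerCond {n : ℕ} (F : Finset (Fin n)) (a : Fin n → ZMod 2) (c : Gn n → ℂ) : Prop :=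
  ∀ v : ℕ → ZMod 2,
    (∑ g : Gn n, if Lmem F a g ∧ ∀ j ∈ Eset n F, psum1 g.1 j = v j then c g else 0) = 0

/-- `M_𝕆` vanishes on the glove element with coefficients `c`. -/
def MOkerCond {n : ℕ} (F : Finset (Fin n)) (a : Fin n → ZMod 2) (c : Gn n → ℂ) : Prop :=
  ∀ v : ℕ → ZMod 2,
    (∑ g : Gn n, if Lmem F a g ∧ ∀ j ∈ Oset n F, psum1 g.1 j = v j then c g else 0) = 0

/-!
The image under `ψ_n` of a glove monomial `q_g q_h` is the sum of the four monomials
`ψ_{T_b}(q_g) ψ_{T_b'}(q_h)`, `b, b' ∈ {0, 1}`. For fixed `(b, b')`, as `g` runs over the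
lexicographically smaller indices `L(n,F,a)`, the exponent of this monomial is a fixed part plus,
on the inner edges `j` of one parity class (`𝔼` or `𝕆`, depending on `(b, b')`), the square of
the edge variable indexed by `g_1 + ⋯ + g_j`. So each of these four partial images vanishes iff
the coefficient sums over the color classes of `𝔼`, resp. `𝕆`, vanish; this gives
`ker M_𝔼 ∩ ker M_𝕆 ⊆ J_n`.

Conversely, edge `2n` counts the factors `ψ_{T_1}`, so the family `(0,0)`, colored by `𝔼`, has
its own monomials, and so has the family `(0,1)`, colored by `𝕆`, once it is told apart from
`(1,0)`. This is where the hypothesis on leaf `1` enters: if `1 ∉ F` the two differ at edge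
`n+1`; if `1 ∈ F` they differ at the first `j ∈ 𝕆`, where `g_1 + ⋯ + g_j` does not depend on
`g`. When `1 ∈ F` and `𝕆 = ∅`, `M_𝕆 = 0` only asks for the total coefficient sum to vanish,
which already follows from `M_𝔼 = 0`.
-/

namespace MvPolynomial

variable {σ ι R : Type*} [CommSemiring R]

theorem coeff_sum_smul_monomial [DecidableEq σ] (s : Finset ι) (c : ι → R) (d : ι → σ →₀ ℕ)
    (m : σ →₀ ℕ) :
    coeff m (∑ i ∈ s, c i • monomial (d i) (1 : R)) = ∑ i ∈ s with d i = m, c i := by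
  simp [coeff_sum, coeff_monomial, Finset.sum_filter]

theorem sum_smul_monomial_eq_zero_iff [DecidableEq σ] (s : Finset ι) (c : ι → R)
    (d : ι → σ →₀ ℕ) :
    ∑ i ∈ s, c i • monomial (d i) (1 : R) = 0 ↔ ∀ m, ∑ i ∈ s with d i = m, c i = 0 := by
  simp only [MvPolynomial.ext_iff, coeff_sum_smul_monomial, coeff_zero]

theorem sum_smul_monomial_eq_zero_iff_of_colors {α β : Type*} [DecidableEq σ]
    [DecidableEq α] [DecidableEq β] (s : Finset ι) (c : ι → R) (d : ι → σ →₀ ℕ)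
    (T : Finset α) (p : ι → α → β)
    (hd : ∀ i ∈ s, ∀ i' ∈ s, d i = d i' ↔ ∀ j ∈ T, p i j = p i' j) :
    ∑ i ∈ s, c i • monomial (d i) (1 : R) = 0 ↔
      ∀ v : α → β, ∑ i ∈ s with ∀ j ∈ T, p i j = v j, c i = 0 := by
  rw [sum_smul_monomial_eq_zero_iff]
  constructor
  · intro h v
    by_cases hv : ∃ i₀ ∈ s, ∀ j ∈ T, p i₀ j = v j
    · obtain ⟨i₀, hi₀, hv⟩ := hv
      rw [← h (d i₀)]
      refine Finset.sum_congr (Finset.filter_congr fun i hi => ?_) fun _ _ => rfl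
      rw [hd i hi i₀ hi₀]
      exact forall₂_congr fun j hj => by rw [hv j hj]
    · push Not at hv
      exact Finset.sum_eq_zero fun i hi =>
        absurd (Finset.mem_filter.1 hi).2 fun h' => by
          obtain ⟨j, hj, hne⟩ := hv i (Finset.mem_filter.1 hi).1
          exact hne (h' j hj)
  · intro h m
    by_cases hm : ∃ i₀ ∈ s, d i₀ = m
    · obtain ⟨i₀, hi₀, rfl⟩ := hm
      rw [← h (p i₀)]
      exact Finset.sum_congr (Finset.filter_congr fun i hi => hd i hi i₀ hi₀) fun _ _ => rfl
    · push Not at hm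
      exact Finset.sum_eq_zero fun i hi => absurd (Finset.mem_filter.1 hi).2
        (hm i (Finset.mem_filter.1 hi).1)

theorem support_sum_smul_monomial_subset [DecidableEq σ] (s : Finset ι) (c : ι → R)
    (d : ι → σ →₀ ℕ) : (∑ i ∈ s, c i • monomial (d i) (1 : R)).support ⊆ s.image d := by
  refine support_sum.trans fun m hm => ?_
  obtain ⟨i, hi, hm⟩ := Finset.mem_biUnion.1 hm
  rw [Finset.mem_singleton.1 (support_monomial_subset (support_smul hm))]
  exact Finset.mem_image_of_mem d hi

theorem prod_X_eq_monomial {τ α : Type*} (s : Finset α) (f : α → τ) :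
    ∏ j ∈ s, (X (f j) : MvPolynomial τ R) = monomial (∑ j ∈ s, Finsupp.single (f j) 1) 1 :=
  (monomial_sum_one s _).symm

theorem eq_zero_of_sum_eq_zero_of_disjoint_support (s : Finset ι) (p : ι → MvPolynomial σ R)
    {i : ι} (hi : i ∈ s) (hdisj : ∀ j ∈ s, j ≠ i → Disjoint (p i).support (p j).support)
    (h : ∑ j ∈ s, p j = 0) : p i = 0 := by
  ext m
  rw [coeff_zero]
  by_contra hm
  have hsum := congrArg (coeff m) h
  rw [coeff_sum, coeff_zero, Finset.sum_eq_single i _ fun hi' => absurd hi hi'] at hsum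
  · exact hm hsum
  intro j hj hji
  by_contra hmj
  exact Finset.disjoint_left.1 (hdisj j hj hji) (mem_support_iff.2 hm) (mem_support_iff.2 hmj)

end MvPolynomial

theorem Finset.sum_eq_zero_of_color_sums_eq_zero {ι α β M : Type*} [DecidableEq α]
    [DecidableEq β] [AddCommMonoid M] (s : Finset ι) (c : ι → M) (T : Finset α)
    (p : ι → α → β) (h : ∀ v : α → β, ∑ i ∈ s with ∀ j ∈ T, p i j = v j, c i = 0) :
    ∑ i ∈ s, c i = 0 := by
  let color : ι → T → β := fun i j => p i j
  rw [← Finset.sum_fiberwise_of_maps_to (t := s.image color) fun i hi => mem_image_of_mem _ hi]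
  refine Finset.sum_eq_zero fun w hw => ?_
  obtain ⟨i₀, -, rfl⟩ := Finset.mem_image.1 hw
  rw [← h (p i₀)]
  refine Finset.sum_congr (Finset.filter_congr fun i _ => ?_) fun _ _ => rfl
  simp only [color, funext_iff, Subtype.forall]

theorem Finsupp.finset_sum_single_apply_of_injective {ι α β : Type*} [DecidableEq ι]
    [DecidableEq α] [DecidableEq β] (T : Finset ι) {φ : ι → α} (hφ : Function.Injective φ)
    (u : ι → β) (k : ℕ) (j₀ : ι) (y : β) :
    (∑ j ∈ T, Finsupp.single (φ j, u j) k) (φ j₀, y) = if j₀ ∈ T ∧ u j₀ = y then k else 0 := by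
  simp only [Finsupp.finsetSum_apply, Finsupp.single_apply, Prod.ext_iff, hφ.eq_iff, ite_and,
    Finset.sum_ite_eq']

theorem Finsupp.finset_sum_single_eq_iff_of_injective {ι α β : Type*} [DecidableEq ι]
    [DecidableEq α] [DecidableEq β] (T : Finset ι) {φ : ι → α} (hφ : Function.Injective φ)
    {k : ℕ} (hk : k ≠ 0) (u u' : ι → β) :
    ∑ j ∈ T, Finsupp.single (φ j, u j) k = ∑ j ∈ T, Finsupp.single (φ j, u' j) k ↔
      ∀ j ∈ T, u j = u' j := by
  refine ⟨fun h j hj => ?_, fun h => Finset.sum_congr rfl fun j hj => by rw [h j hj]⟩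
  have hj' := DFunLike.congr_fun h (φ j, u j)
  rw [finset_sum_single_apply_of_injective T hφ, finset_sum_single_apply_of_injective T hφ,
    if_pos ⟨hj, rfl⟩] at hj'
  by_contra hne
  rw [if_neg fun h' => hne h'.2.symm] at hj'
  exact hk hj'

section Exponents

variable {n : ℕ}

def leafExp (x : Fin n → ZMod 2) : (ℕ × ZMod 2) →₀ ℕ :=
  ∑ i : Fin n, Finsupp.single ((i : ℕ) + 1, x i) 1

theorem leafExp_apply_of_lt (x : Fin n → ZMod 2) {m : ℕ} (hm : n < m) (y : ZMod 2) :
    leafExp x (m, y) = 0 := by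
  simp only [leafExp, Finsupp.finsetSum_apply, Finsupp.single_apply, Prod.ext_iff]
  exact sum_eq_zero fun i _ => if_neg fun h => by omega

variable [NeZero n]

theorem psum1_one (x : Fin n → ZMod 2) : psum1 x 1 = x 0 := by
  have h1 : (univ.filter fun i : Fin n => (i : ℕ) < 1) = {0} := by
    ext i
    simp only [mem_filter, mem_univ, true_and, mem_singleton, Fin.ext_iff, Fin.val_zero]
    omega
  rw [psum1, h1, sum_singleton]

theorem psum2_eq_psum1_add (x : Fin n → ZMod 2) {j : ℕ} (hj : 1 ≤ j) :
    psum2 x j = psum1 x j + x 0 := by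
  have hsplit : (univ.filter fun i : Fin n => (i : ℕ) < j) =
      insert 0 (univ.filter fun i : Fin n => 0 < (i : ℕ) ∧ (i : ℕ) < j) := by
    ext i
    simp only [mem_filter, mem_univ, true_and, mem_insert, Fin.ext_iff, Fin.val_zero]
    omega
  rw [psum1, hsplit, sum_insert (by simp), psum2, add_comm (x 0), add_assoc,
    CharTwo.add_self_eq_zero, add_zero]

theorem psum2_self (x : Fin n → ZMod 2) (hx : ∑ i, x i = 0) : psum2 x n = x 0 := by
  rw [psum2_eq_psum1_add x NeZero.one_le, psum1,
    show (univ.filter fun i : Fin n => (i : ℕ) < n) = univ by ext i; simp, hx, zero_add]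

/-- The exponent of `ψ_{T_0}(q_x)` for `b = false` and of `ψ_{T_1}(q_x)` for `b = true`,
valid when `x_1 + ⋯ + x_n = 0`: the inner edges `2, …, n-1` of `T_1` carry
`x_2 + ⋯ + x_j = (x_1 + ⋯ + x_j) + x_1`, and the edge `n + 1` of `T_0`, resp. `2n` of `T_1`,
carries `x_1`. -/
def treeExp (b : Bool) (x : Fin n → ZMod 2) : (ℕ × ZMod 2) →₀ ℕ :=
  leafExp x + Finsupp.single (n + if b then n else 1, x 0) 1 +
    ∑ j ∈ Icc 2 (n - 1), Finsupp.single (n + j, psum1 x j + if b then x 0 else 0) 1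

theorem tree0Monom_eq (hn : 2 ≤ n) (x : Fin n → ZMod 2) :
    tree0Monom x = monomial (treeExp false x) 1 := by
  rw [tree0Monom, leafMonom, prod_X_eq_monomial, prod_X_eq_monomial, monomial_mul, one_mul,
    show Icc 1 (n - 1) = insert 1 (Icc 2 (n - 1)) by ext; simp; omega, sum_insert (by simp),
    psum1_one, treeExp, leafExp]
  simp only [Bool.false_eq_true, if_false, add_zero, add_assoc]

theorem tree1Monom_eq (hn : 2 ≤ n) (x : Fin n → ZMod 2) (hx : ∑ i, x i = 0) :
    tree1Monom x = monomial (treeExp true x) 1 := by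
  have hinner : ∑ j ∈ Icc 2 (n - 1), (Finsupp.single (n + j, psum2 x j) 1 : (ℕ × ZMod 2) →₀ ℕ) =
      ∑ j ∈ Icc 2 (n - 1), Finsupp.single (n + j, psum1 x j + x 0) 1 :=
    Finset.sum_congr rfl fun j hj => by rw [psum2_eq_psum1_add x (by simp at hj; omega)]
  rw [tree1Monom, leafMonom, prod_X_eq_monomial, prod_X_eq_monomial, monomial_mul, one_mul,
    show Icc 2 n = insert n (Icc 2 (n - 1)) by ext; simp; omega, sum_insert (by simp; omega),
    psum2_self x hx, hinner, treeExp, leafExp, if_pos rfl, if_pos rfl, add_assoc]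

theorem ψsunlet_X_mul_X (hn : 2 ≤ n) (g h : Gn n) :
    ψsunlet n (X g * X h) =
      ∑ k : Bool × Bool, monomial (treeExp k.1 g.1 + treeExp k.2 h.1) (1 : ℂ) := by
  simp only [map_mul, ψsunlet, aeval_X, tree0Monom_eq hn, tree1Monom_eq hn _ g.2,
    tree1Monom_eq hn _ h.2, Fintype.sum_prod_type, Fintype.sum_bool, add_mul, mul_add,
    monomial_mul, one_mul]
  abel

theorem treeExp_apply (b : Bool) (x : Fin n → ZMod 2) {j : ℕ} (hj : 1 ≤ j)
    (y : ZMod 2) :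
    treeExp b x (n + j, y) =
      (if (j = if b then n else 1) ∧ x 0 = y then 1 else 0) +
        if j ∈ Icc 2 (n - 1) ∧ psum1 x j + (if b then x 0 else 0) = y then 1 else 0 := by
  have hinner := Finsupp.finset_sum_single_apply_of_injective (Icc 2 (n - 1))
    (add_right_injective n) (fun j => psum1 x j + if b then x 0 else 0) 1 j y
  simp only [treeExp, Finsupp.add_apply, leafExp_apply_of_lt x (by omega : n < n + j), zero_add,
    Finsupp.single_apply, Prod.ext_iff, add_right_inj, hinner]
  simp only [eq_comm]

theorem treeExp_apply_n_add_n (hn : 2 ≤ n) (b : Bool) (x : Fin n → ZMod 2) (y : ZMod 2) :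
    treeExp b x (n + n, y) = if b ∧ x 0 = y then 1 else 0 := by
  rw [treeExp_apply b x (by omega)]
  have hn' : ¬n ≤ n - 1 := by omega
  cases b <;> simp [show n ≠ 1 by omega, hn']

theorem treeExp_apply_n_add_one (hn : 2 ≤ n) (b : Bool) (x : Fin n → ZMod 2) (y : ZMod 2) :
    treeExp b x (n + 1, y) = if !b ∧ x 0 = y then 1 else 0 := by
  rw [treeExp_apply b x le_rfl]
  cases b <;> simp [show 1 ≠ n by omega]

theorem treeExp_apply_inner (b : Bool) (x : Fin n → ZMod 2) {j : ℕ}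
    (hj : j ∈ Icc 2 (n - 1)) (y : ZMod 2) :
    treeExp b x (n + j, y) = if psum1 x j + (if b then x 0 else 0) = y then 1 else 0 := by
  rw [mem_Icc] at hj
  rw [treeExp_apply b x (by omega)]
  cases b <;> simp [hj, show j ≠ 1 by omega, show j ≠ n by omega]

end Exponents

section Glove

variable {n : ℕ} {F : Finset (Fin n)} {a : Fin n → ZMod 2} {g : Gn n}

theorem GlovePair.right_unique {h h' : Gn n} (H : GlovePair F a g h) (H' : GlovePair F a g h') :
    h = h' := by
  refine Subtype.ext (funext fun i => ?_)
  by_cases hi : i ∈ F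
  · rw [H.2.1 i hi, H'.2.1 i hi]
  · exact add_left_cancel ((H.2.2 i hi).trans (H'.2.2 i hi).symm)

/-- The partner `h` of the glove monomial `q_g q_h`; junk value `g` when `g ∉ L(n,F,a)`. -/
def mate (F : Finset (Fin n)) (a : Fin n → ZMod 2) (g : Gn n) : Gn n :=
  if h : Lmem F a g then h.choose else g

theorem Lmem.glovePair_mate (hg : Lmem F a g) : GlovePair F a g (mate F a g) := by
  rw [mate, dif_pos hg]; exact hg.choose_spec.1

theorem Lmem.lexLe_mate (hg : Lmem F a g) : lexLe g.1 (mate F a g).1 := by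
  rw [mate, dif_pos hg]; exact hg.choose_spec.2

def Lset (F : Finset (Fin n)) (a : Fin n → ZMod 2) : Finset (Gn n) := univ.filter (Lmem F a)

theorem mem_Lset : g ∈ Lset F a ↔ Lmem F a g := by simp [Lset]

theorem sum_ite_Lmem_and {M : Type*} [AddCommMonoid M] (P : Gn n → Prop) [DecidablePred P]
    (c : Gn n → M) :
    ∑ g, (if Lmem F a g ∧ P g then c g else 0) = ∑ g ∈ Lset F a with P g, c g := by
  rw [Lset, filter_filter, sum_filter]

theorem gloveElt_eq_sum (c : Gn n → ℂ) :
    gloveElt F a c = ∑ g ∈ Lset F a, c g • (X g * X (mate F a g)) := by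
  rw [Lset, sum_filter]
  refine Finset.sum_congr rfl fun g _ => ?_
  split_ifs with hg
  · rw [sum_eq_single (mate F a g) _ (by simp), if_pos ⟨hg.glovePair_mate, hg.lexLe_mate⟩]
    rintro h - hne
    rw [if_neg fun H => hne (hg.glovePair_mate.right_unique H.1).symm, zero_smul]
  · exact sum_eq_zero fun h _ => by rw [if_neg fun H => hg ⟨h, H⟩, zero_smul]

theorem Lmem.apply_of_mem (hg : Lmem F a g) {i : Fin n} (hi : i ∈ F) : g.1 i = a i :=
  hg.glovePair_mate.1 i hi

theorem Lmem.mate_apply (hg : Lmem F a g) (i : Fin n) :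
    (mate F a g).1 i = g.1 i + if i ∈ F then 0 else 1 := by
  split_ifs with hi
  · rw [hg.glovePair_mate.2.1 i hi, hg.apply_of_mem hi, add_zero]
  · rw [← hg.glovePair_mate.2.2 i hi, ← add_assoc, CharTwo.add_self_eq_zero, zero_add]

theorem Lmem.psum1_mate (hg : Lmem F a g) (j : ℕ) :
    psum1 (mate F a g).1 j = psum1 g.1 j + cardInit F j := by
  simp only [psum1, cardInit, hg.mate_apply, sum_add_distrib, sum_ite, sum_const_zero, zero_add,
    sum_const, nsmul_eq_mul, mul_one, sdiff_eq_filter, filter_filter]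

/-- This is where the lexicographic minimality of `g` in `q_g q_h` enters. -/
theorem Lmem.apply_eq_zero_of_forall_lt_mem (hg : Lmem F a g) {i : Fin n} (hi : i ∉ F)
    (hlt : ∀ i' < i, i' ∈ F) : g.1 i = 0 := by
  have hsum := hg.glovePair_mate.2.2 i hi
  rcases hg.lexLe_mate with heq | ⟨w, hagree, hw⟩
  · rw [← heq, CharTwo.add_self_eq_zero] at hsum
    exact absurd hsum zero_ne_one
  rcases lt_trichotomy w i with hwi | rfl | hiw
  · rw [hg.apply_of_mem (hlt w hwi), hg.glovePair_mate.2.1 w (hlt w hwi)] at hw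
    exact absurd hw (lt_irrefl _)
  · exact (ZMod.val_eq_zero _).1 (by have := ZMod.val_lt ((mate F a g).1 w); omega)
  · rw [hagree i hiw, CharTwo.add_self_eq_zero] at hsum
    exact absurd hsum zero_ne_one

def pair01 (m : ℕ) : (ℕ × ZMod 2) →₀ ℕ := Finsupp.single (m, 0) 1 + Finsupp.single (m, 1) 1

theorem single_add_single_add (m : ℕ) (u τ : ZMod 2) :
    Finsupp.single (m, u) 1 + Finsupp.single (m, u + τ) 1 =
      if τ = 0 then Finsupp.single (m, u) 2 else pair01 m := by
  split_ifs with hτ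
  · rw [hτ, add_zero, ← Finsupp.single_add]
  · rw [show τ = 1 by revert τ; decide, pair01]
    fin_cases u
    · rfl
    · exact add_comm _ _

def leafPairExp (F : Finset (Fin n)) (a : Fin n → ZMod 2) : (ℕ × ZMod 2) →₀ ℕ :=
  ∑ i : Fin n, if i ∈ F then Finsupp.single ((i : ℕ) + 1, a i) 2 else pair01 ((i : ℕ) + 1)

theorem Lmem.leafExp_add_leafExp_mate (hg : Lmem F a g) :
    leafExp g.1 + leafExp (mate F a g).1 = leafPairExp F a := by
  rw [leafExp, leafExp, leafPairExp, ← sum_add_distrib]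
  refine Finset.sum_congr rfl fun i _ => ?_
  rw [hg.mate_apply, single_add_single_add]
  split_ifs <;> simp_all [hg.apply_of_mem]

def colorSet (F : Finset (Fin n)) (κ : ZMod 2) : Finset ℕ :=
  (Icc 2 (n - 1)).filter fun j => (cardInit F j : ZMod 2) = κ

theorem colorSet_zero : colorSet F 0 = Eset n F := by
  simp only [colorSet, Eset, ZMod.natCast_eq_zero_iff_even]

theorem colorSet_one : colorSet F 1 = Oset n F := by
  simp only [colorSet, Oset, ZMod.natCast_eq_one_iff_odd]

theorem MEkerCond_iff {c : Gn n → ℂ} : MEkerCond F a c ↔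
    ∀ v : ℕ → ZMod 2, ∑ g ∈ Lset F a with ∀ j ∈ colorSet F 0, psum1 g.1 j = v j, c g = 0 := by
  simp only [MEkerCond, sum_ite_Lmem_and, colorSet_zero]

theorem MOkerCond_iff {c : Gn n → ℂ} : MOkerCond F a c ↔
    ∀ v : ℕ → ZMod 2, ∑ g ∈ Lset F a with ∀ j ∈ colorSet F 1, psum1 g.1 j = v j, c g = 0 := by
  simp only [MOkerCond, sum_ite_Lmem_and, colorSet_one]

end Glove

section FamilyExponents

variable {n : ℕ} [NeZero n] {F : Finset (Fin n)} {a : Fin n → ZMod 2} {g g' : Gn n}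

/-- The value of `g_1` for every `g ∈ L(n,F,a)`. -/
def leadBit (F : Finset (Fin n)) (a : Fin n → ZMod 2) : ZMod 2 := if 0 ∈ F then a 0 else 0

/-- The value of `h_1` for every glove monomial `q_g q_h` with `g ∈ L(n,F,a)`. -/
def mateLeadBit (F : Finset (Fin n)) (a : Fin n → ZMod 2) : ZMod 2 := if 0 ∈ F then a 0 else 1

theorem Lmem.apply_zero (hg : Lmem F a g) : g.1 0 = leadBit F a := by
  unfold leadBit
  split_ifs with h0
  · exact hg.apply_of_mem h0
  · exact hg.apply_eq_zero_of_forall_lt_mem h0 fun i hi => absurd hi (Fin.not_lt_zero i)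

theorem Lmem.mate_apply_zero (hg : Lmem F a g) : (mate F a g).1 0 = mateLeadBit F a := by
  rw [hg.mate_apply, hg.apply_zero, leadBit, mateLeadBit]
  split_ifs <;> simp

/-- `ψ_{T_b}(q_g) ψ_{T_b'}(q_h)` has a squared edge variable exactly on the inner edges `j` with
`|{1,…,j} ∖ F| ≡ pairShift F a b b'`. -/
def pairShift (F : Finset (Fin n)) (a : Fin n → ZMod 2) (b b' : Bool) : ZMod 2 :=
  (if b then leadBit F a else 0) + if b' then mateLeadBit F a else 0

theorem Lmem.treeExp_add_treeExp_mate (hg : Lmem F a g) (b b' : Bool) :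
    treeExp b g.1 + treeExp b' (mate F a g).1 =
      (leafPairExp F a + Finsupp.single (n + if b then n else 1, leadBit F a) 1 +
          Finsupp.single (n + if b' then n else 1, mateLeadBit F a) 1 +
          ∑ j ∈ Icc 2 (n - 1) with (cardInit F j : ZMod 2) ≠ pairShift F a b b', pair01 (n + j)) +
        ∑ j ∈ colorSet F (pairShift F a b b'),
          Finsupp.single (n + j, psum1 g.1 j + if b then leadBit F a else 0) 2 := by
  have hinner : ∀ j ∈ Icc 2 (n - 1),
      Finsupp.single (n + j, psum1 g.1 j + if b then g.1 0 else 0) 1 +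
          Finsupp.single (n + j, psum1 (mate F a g).1 j + if b' then (mate F a g).1 0 else 0) 1 =
        if (cardInit F j : ZMod 2) = pairShift F a b b' then
          Finsupp.single (n + j, psum1 g.1 j + if b then leadBit F a else 0) 2
        else pair01 (n + j) := fun j _ => by
    have hlabel : psum1 g.1 j + cardInit F j + (if b' then mateLeadBit F a else 0) =
        (psum1 g.1 j + if b then leadBit F a else 0) + (cardInit F j + pairShift F a b b') := by
      rw [pairShift]
      linear_combination (-(if b then leadBit F a else 0)) * CharTwo.two_eq_zero (R := ZMod 2)
    rw [hg.psum1_mate, hg.apply_zero, hg.mate_apply_zero, hlabel, single_add_single_add]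
    simp only [CharTwo.add_eq_zero]
  calc treeExp b g.1 + treeExp b' (mate F a g).1
      = (leafExp g.1 + leafExp (mate F a g).1) +
          Finsupp.single (n + if b then n else 1, g.1 0) 1 +
          Finsupp.single (n + if b' then n else 1, (mate F a g).1 0) 1 +
          ∑ j ∈ Icc 2 (n - 1),
            (Finsupp.single (n + j, psum1 g.1 j + if b then g.1 0 else 0) 1 +
              Finsupp.single (n + j,
                psum1 (mate F a g).1 j + if b' then (mate F a g).1 0 else 0) 1) := by
        rw [treeExp, treeExp, sum_add_distrib]; abel
    _ = _ := by
        rw [sum_congr rfl hinner, sum_ite, hg.leafExp_add_leafExp_mate, hg.apply_zero,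
          hg.mate_apply_zero, colorSet]
        abel

end FamilyExponents

section FamilyPolynomials

variable {n : ℕ} [NeZero n] {F : Finset (Fin n)} {a : Fin n → ZMod 2} {g g' : Gn n}

theorem Lmem.treeExp_add_treeExp_mate_eq_iff (hg : Lmem F a g) (hg' : Lmem F a g')
    (b b' : Bool) :
    treeExp b g.1 + treeExp b' (mate F a g).1 = treeExp b g'.1 + treeExp b' (mate F a g').1 ↔
      ∀ j ∈ colorSet F (pairShift F a b b'), psum1 g.1 j = psum1 g'.1 j := by
  rw [hg.treeExp_add_treeExp_mate, hg'.treeExp_add_treeExp_mate, add_right_inj,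
    Finsupp.finset_sum_single_eq_iff_of_injective _ (add_right_injective n) two_ne_zero]
  simp only [add_left_inj]

/-- The part `∑ c_g ψ_{T_b}(q_g) ψ_{T_b'}(q_h)` of the image of the glove element. -/
def familyPoly (F : Finset (Fin n)) (a : Fin n → ZMod 2) (c : Gn n → ℂ) (b b' : Bool) : Sn :=
  ∑ g ∈ Lset F a, c g • monomial (treeExp b g.1 + treeExp b' (mate F a g).1) 1

theorem ψsunlet_gloveElt (hn : 2 ≤ n) (c : Gn n → ℂ) :
    ψsunlet n (gloveElt F a c) = ∑ k : Bool × Bool, familyPoly F a c k.1 k.2 := by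
  simp only [gloveElt_eq_sum, map_sum, map_smul, ψsunlet_X_mul_X hn, Finset.smul_sum, familyPoly]
  exact Finset.sum_comm

theorem familyPoly_eq_zero_iff (c : Gn n → ℂ) (b b' : Bool) :
    familyPoly F a c b b' = 0 ↔ ∀ v : ℕ → ZMod 2,
      ∑ g ∈ Lset F a with ∀ j ∈ colorSet F (pairShift F a b b'), psum1 g.1 j = v j, c g = 0 :=
  sum_smul_monomial_eq_zero_iff_of_colors _ _ _ _ _ fun _ hg _ hg' =>
    (mem_Lset.1 hg).treeExp_add_treeExp_mate_eq_iff (mem_Lset.1 hg') b b'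

theorem familyPoly_eq_zero_of_ψsunlet_eq_zero (hn : 2 ≤ n) {c : Gn n → ℂ}
    (h : ψsunlet n (gloveElt F a c) = 0) {b b' : Bool}
    (hsep : ∀ k : Bool × Bool, k ≠ (b, b') → ∀ g ∈ Lset F a, ∀ g' ∈ Lset F a,
      treeExp b g.1 + treeExp b' (mate F a g).1 ≠ treeExp k.1 g'.1 + treeExp k.2 (mate F a g').1) :
    familyPoly F a c b b' = 0 := by
  have hdisj : ∀ k ∈ (univ : Finset (Bool × Bool)), k ≠ (b, b') →
      Disjoint (familyPoly F a c b b').support (familyPoly F a c k.1 k.2).support := by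
    intro k _ hk
    refine disjoint_of_subset_left (support_sum_smul_monomial_subset _ _ _)
      (disjoint_of_subset_right (support_sum_smul_monomial_subset _ _ _) ?_)
    simp only [disjoint_left, mem_image, not_exists, not_and]
    intro m hm g' hg' heq
    obtain ⟨g, hg, hgm⟩ := hm
    exact hsep k hk g hg g' hg' (hgm.trans heq.symm)
  have hsum : ∑ k ∈ (univ : Finset (Bool × Bool)), familyPoly F a c k.1 k.2 = 0 := by
    rw [← ψsunlet_gloveElt hn c, h]
  exact eq_zero_of_sum_eq_zero_of_disjoint_support (univ : Finset (Bool × Bool))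
    (fun k => familyPoly F a c k.1 k.2) (i := (b, b')) (mem_univ _) hdisj hsum

end FamilyPolynomials

section Separation

variable {n : ℕ} [NeZero n] {F : Finset (Fin n)} {a : Fin n → ZMod 2} {g g' : Gn n}

theorem sum_treeExp_apply_n_add_n (hn : 2 ≤ n) (b : Bool) (x : Fin n → ZMod 2) :
    ∑ y : ZMod 2, treeExp b x (n + n, y) = b.toNat := by
  cases b <;> simp [treeExp_apply_n_add_n hn]

/-- The number of factors `ψ_{T_1}` is read off from the edge `2n`, which only `T_1` has. -/
theorem treeExp_add_treeExp_ne (hn : 2 ≤ n) {b b' c c' : Bool}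
    (h : b.toNat + b'.toNat ≠ c.toNat + c'.toNat) (x y x' y' : Fin n → ZMod 2) :
    treeExp b x + treeExp b' y ≠ treeExp c x' + treeExp c' y' := fun heq => h <| by
  simpa only [Finsupp.add_apply, sum_add_distrib, sum_treeExp_apply_n_add_n hn] using
    congrArg (fun d => ∑ z : ZMod 2, d (n + n, z)) heq

theorem Lmem.treeExp_add_treeExp_mate_ne_of_zero_notMem (hn : 2 ≤ n) (h0 : (0 : Fin n) ∉ F)
    (hg : Lmem F a g) (hg' : Lmem F a g') :
    treeExp false g.1 + treeExp true (mate F a g).1 ≠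
      treeExp true g'.1 + treeExp false (mate F a g').1 := fun heq => by
  simpa [treeExp_apply_n_add_one hn, hg.apply_zero, hg'.mate_apply_zero, leadBit, mateLeadBit,
    h0] using DFunLike.congr_fun heq (n + 1, 0)

/-- When `1 ∈ F`, take `i` the first index outside `F`: then `|{1,…,i} ∖ F| = 1`, and the
partial sum `g_1 + ⋯ + g_i` is the same for all `g ∈ L(n,F,a)` since `g_i = 0`. -/
theorem exists_mem_Oset_forall_psum1_eq (h0 : (0 : Fin n) ∈ F) (hO : (Oset n F).Nonempty) :
    ∃ j ∈ Oset n F, ∀ g g' : Gn n, Lmem F a g → Lmem F a g' → psum1 g.1 j = psum1 g'.1 j := by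
  obtain ⟨j, hj⟩ := hO
  simp only [Oset, mem_filter, mem_Icc] at hj
  obtain ⟨i, hi⟩ : ((univ.filter fun i : Fin n => (i : ℕ) < j) \ F).Nonempty :=
    card_pos.1 hj.2.pos
  simp only [mem_sdiff, mem_filter, mem_univ, true_and] at hi
  set i₁ := Fᶜ.min' ⟨i, mem_compl.2 hi.2⟩
  have hi₁F : i₁ ∉ F := mem_compl.1 (Fᶜ.min'_mem _)
  have hlt : ∀ i' < i₁, i' ∈ F := fun i' hi' => by
    by_contra h'
    exact absurd (Fᶜ.min'_le i' (mem_compl.2 h')) (not_le.2 hi')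
  have hi₁i : i₁ ≤ i := Fᶜ.min'_le i (mem_compl.2 hi.2)
  have hi₁0 : (i₁ : ℕ) ≠ 0 := fun h => hi₁F (by rwa [show i₁ = 0 from Fin.ext h])
  have hinit : ((univ.filter fun i : Fin n => (i : ℕ) < i₁ + 1) \ F) = {i₁} := by
    ext i'
    simp only [mem_sdiff, mem_filter, mem_univ, true_and, mem_singleton]
    refine ⟨fun ⟨hlt', hF'⟩ => ?_, ?_⟩
    rcases (Nat.lt_succ_iff.1 hlt').lt_or_eq with h | h
    · exact absurd (hlt i' h) hF'
    · exact Fin.ext h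
    rintro rfl
    exact ⟨Nat.lt_succ_self _, hi₁F⟩
  refine ⟨i₁ + 1, ?_, fun g g' hg hg' => Finset.sum_congr rfl fun i' hi' => ?_⟩
  · rw [Oset, mem_filter, mem_Icc, cardInit, hinit, card_singleton]
    exact ⟨⟨by omega, by have := Fin.le_iff_val_le_val.1 hi₁i; omega⟩, odd_one⟩
  · rcases (Nat.lt_succ_iff.1 (mem_filter.1 hi').2).lt_or_eq with h | h
    · rw [hg.apply_of_mem (hlt i' h), hg'.apply_of_mem (hlt i' h)]
    · rw [show i' = i₁ from Fin.ext h, hg.apply_eq_zero_of_forall_lt_mem hi₁F hlt,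
        hg'.apply_eq_zero_of_forall_lt_mem hi₁F hlt]

theorem Lmem.treeExp_add_treeExp_mate_ne_of_zero_mem (h0 : (0 : Fin n) ∈ F)
    (ha : a 0 = 1) (hO : (Oset n F).Nonempty) (hg : Lmem F a g) (hg' : Lmem F a g') :
    treeExp false g.1 + treeExp true (mate F a g).1 ≠
      treeExp true g'.1 + treeExp false (mate F a g').1 := fun heq => by
  obtain ⟨j, hjO, hj⟩ := exists_mem_Oset_forall_psum1_eq (a := a) h0 hO
  have hjmid : j ∈ Icc 2 (n - 1) := (mem_filter.1 hjO).1
  have hodd : (cardInit F j : ZMod 2) = 1 := ZMod.natCast_eq_one_iff_odd.2 (mem_filter.1 hjO).2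
  have hpt := DFunLike.congr_fun heq (n + j, psum1 g.1 j)
  simp only [Finsupp.add_apply, treeExp_apply_inner _ _ hjmid, hg.psum1_mate, hg'.psum1_mate,
    hg.mate_apply_zero, hg'.apply_zero, hj g g' hg hg', hodd, leadBit, mateLeadBit, if_pos h0,
    ha, Bool.false_eq_true, ↓reduceIte, add_zero] at hpt
  revert hpt
  generalize psum1 g'.1 j = p
  revert p
  decide

end Separation

section Kernel

variable {n : ℕ} [NeZero n] {F : Finset (Fin n)} {a : Fin n → ZMod 2} {c : Gn n → ℂ}

theorem ψsunlet_gloveElt_eq_zero (hn : 2 ≤ n) (hE : MEkerCond F a c) (hO : MOkerCond F a c) :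
    ψsunlet n (gloveElt F a c) = 0 := by
  rw [ψsunlet_gloveElt hn]
  refine sum_eq_zero fun k _ => (familyPoly_eq_zero_iff c k.1 k.2).2 ?_
  generalize pairShift F a k.1 k.2 = κ
  fin_cases κ
  · exact MEkerCond_iff.1 hE
  · exact MOkerCond_iff.1 hO

theorem MEkerCond_of_ψsunlet_eq_zero (hn : 2 ≤ n) (h : ψsunlet n (gloveElt F a c) = 0) :
    MEkerCond F a c := by
  have hsep : ∀ k : Bool × Bool, k ≠ (false, false) → ∀ g ∈ Lset F a, ∀ g' ∈ Lset F a,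
      treeExp false g.1 + treeExp false (mate F a g).1 ≠
        treeExp k.1 g'.1 + treeExp k.2 (mate F a g').1 := fun k hk _ _ _ _ =>
    treeExp_add_treeExp_ne hn (by revert k; decide) _ _ _ _
  simpa [MEkerCond_iff, pairShift] using
    (familyPoly_eq_zero_iff c false false).1 (familyPoly_eq_zero_of_ψsunlet_eq_zero hn h hsep)

theorem MOkerCond_of_ψsunlet_eq_zero (hn : 2 ≤ n)
    (hF : (0 : Fin n) ∉ F ∨ ((0 : Fin n) ∈ F ∧ a 0 = 1)) (h : ψsunlet n (gloveElt F a c) = 0) :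
    MOkerCond F a c := by
  by_cases hsep : (0 : Fin n) ∉ F ∨ (Oset n F).Nonempty
  · have hCD : ∀ g ∈ Lset F a, ∀ g' ∈ Lset F a,
        treeExp false g.1 + treeExp true (mate F a g).1 ≠
          treeExp true g'.1 + treeExp false (mate F a g').1 := fun g hg g' hg' => by
      rw [mem_Lset] at hg hg'
      rcases hF with h0 | ⟨h0, ha⟩
      · exact hg.treeExp_add_treeExp_mate_ne_of_zero_notMem hn h0 hg'
      · exact hg.treeExp_add_treeExp_mate_ne_of_zero_mem h0 ha
          (hsep.resolve_left (not_not.2 h0)) hg'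
    have hsep' : ∀ k : Bool × Bool, k ≠ (false, true) → ∀ g ∈ Lset F a, ∀ g' ∈ Lset F a,
        treeExp false g.1 + treeExp true (mate F a g).1 ≠
          treeExp k.1 g'.1 + treeExp k.2 (mate F a g').1 := fun k hk g hg g' hg' => by
      by_cases hk' : k = (true, false)
      · subst hk'; exact hCD g hg g' hg'
      · exact treeExp_add_treeExp_ne hn (by revert k; decide) _ _ _ _
    have hshift : pairShift F a false true = 1 := by
      rcases hF with h0 | ⟨h0, ha⟩ <;> simp [pairShift, mateLeadBit, *]
    simpa [MOkerCond_iff, hshift] using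
      (familyPoly_eq_zero_iff c false true).1 (familyPoly_eq_zero_of_ψsunlet_eq_zero hn h hsep')
  · rw [not_or, not_not, not_nonempty_iff_eq_empty] at hsep
    have htotal : ∑ g ∈ Lset F a, c g = 0 :=
      Finset.sum_eq_zero_of_color_sums_eq_zero (Lset F a) c (colorSet F 0) (fun g => psum1 g.1)
        (MEkerCond_iff.1 (MEkerCond_of_ψsunlet_eq_zero hn h))
    rw [Lset, sum_filter] at htotal
    exact fun v => (sum_congr rfl fun g _ => by simp [hsep.2]).trans htotal

end Kernel

/-- Theorem 4.4 (main theorem), first case: if leaf 1 is not in `F`, or is in `F` with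
`a_1 = 1`, then `J_n ∩ G(n,F,a) = ker M_𝔼 ∩ ker M_𝕆`. -/
theorem sunlet_glove_kernel (n : ℕ) (hn : 4 ≤ n) (F : Finset (Fin n)) (a : Fin n → ZMod 2)
    (hF : (⟨0, by omega⟩ : Fin n) ∉ F ∨ ((⟨0, by omega⟩ : Fin n) ∈ F ∧ a ⟨0, by omega⟩ = 1))
    (c : Gn n → ℂ) :
    gloveElt F a c ∈ Jsunlet n ↔ MEkerCond F a c ∧ MOkerCond F a c := by
  have : NeZero n := ⟨by omega⟩
  have hn2 : 2 ≤ n := by omega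
  rw [Jsunlet, RingHom.mem_ker]
  exact ⟨fun h => ⟨MEkerCond_of_ψsunlet_eq_zero hn2 h, MOkerCond_of_ψsunlet_eq_zero hn2 hF h⟩,
    fun ⟨hE, hO⟩ => ψsunlet_gloveElt_eq_zero hn2 hE hO⟩
end
end

section
/- Let n ≥ 4 be even. For every c ∈ (ℤ/2ℤ)^{{2,…,n−1}} with c|_𝔼 ≠ 0 and c|_𝕆 ≠ 0, the polynomial f_c lies in J_n ∩ G(n,∅), and the set B_n = {f_c : c ∈ (ℤ/2ℤ)^{{2,…,n−1}}, c|_𝔼 ≠ 0, c|_𝕆 ≠ 0} is a ℂ-vector-space basis of J_n ∩ G(n,∅). -/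
noncomputable section

open MvPolynomial Finset

/-- `c̃ : ℕ → ZMod 2` extends `c ∈ (ℤ/2ℤ)^{2,…,n-1}` by zero (1-based positions). -/
def ctil (n : ℕ) (c : ℕ → ZMod 2) (j : ℕ) : ZMod 2 :=
  if 2 ≤ j ∧ j ≤ n - 1 then c j else 0

lemma ctil_zero (n : ℕ) (c : ℕ → ZMod 2) : ctil n c 0 = 0 := by simp [ctil]

lemma ctil_top (n : ℕ) (c : ℕ → ZMod 2) : ctil n c n = 0 := by
  unfold ctil; rw [if_neg]; omega

lemma gvec_sum (n : ℕ) (c : ℕ → ZMod 2) :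
    ∑ i : Fin n, (ctil n c i.val + ctil n c (i.val + 1)) = 0 := by
  have h : ∀ i : ℕ, ctil n c i + ctil n c (i + 1) = ctil n c (i + 1) - ctil n c i := by
    intro i; rw [CharTwo.sub_eq_add, add_comm]
  calc ∑ i : Fin n, (ctil n c i.val + ctil n c (i.val + 1))
      = ∑ i ∈ range n, (ctil n c i + ctil n c (i + 1)) :=
        Fin.sum_univ_eq_sum_range (fun i => ctil n c i + ctil n c (i + 1)) n
    _ = ∑ i ∈ range n, (ctil n c (i + 1) - ctil n c i) := by simp_rw [h]
    _ = ctil n c n - ctil n c 0 := Finset.sum_range_sub (fun i => ctil n c i) n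
    _ = 0 := by rw [ctil_zero, ctil_top, sub_zero]

/-- The element `g(c) ∈ G_n` with `g_1 = 0` and `g_i = c̃_{i-1} + c̃_i` (1-based). -/
def gElem (n : ℕ) (c : ℕ → ZMod 2) : Gn n :=
  ⟨fun i => ctil n c i.val + ctil n c (i.val + 1), gvec_sum n c⟩

/-- The element `h(c) = 𝟙 + g(c) ∈ G_n` (for even `n`). -/
def hElem (n : ℕ) (he : Even n) (c : ℕ → ZMod 2) : Gn n :=
  ⟨fun i => 1 + (gElem n c).1 i, by
    have h1 : ∑ i : Fin n, ((1 : ZMod 2) + (gElem n c).1 i)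
        = ∑ _i : Fin n, (1 : ZMod 2) + ∑ i : Fin n, (gElem n c).1 i :=
      Finset.sum_add_distrib
    have h2 : ∑ _i : Fin n, (1 : ZMod 2) = (n : ZMod 2) := by
      simp [Finset.sum_const, Finset.card_univ]
    rw [h1, h2, (gElem n c).2, add_zero]
    obtain ⟨k, hk⟩ := he
    subst hk
    push_cast
    exact CharTwo.add_self_eq_zero _⟩

/-- The restriction `(c|_𝔼, 0)` of `c` to the even positions. -/
def cE (c : ℕ → ZMod 2) : ℕ → ZMod 2 := fun j => if Even j then c j else 0

/-- The restriction `(0, c|_𝕆)` of `c` to the odd positions. -/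
def cO (c : ℕ → ZMod 2) : ℕ → ZMod 2 := fun j => if Even j then 0 else c j

/-- The quadratic `f_c ∈ R_n` from Theorem 4.8. -/
def fpoly (n : ℕ) (he : Even n) (c : ℕ → ZMod 2) : Rn n :=
  X (gElem n 0) * X (hElem n he 0)
    - X (gElem n (cE c)) * X (hElem n he (cE c))
    + X (gElem n c) * X (hElem n he c)
    - X (gElem n (cO c)) * X (hElem n he (cO c))
/-- The index set `B_n`: elements `c ∈ (ℤ/2ℤ)^{2,…,n-1}` (encoded as functions `ℕ → ZMod 2`
supported on `{2,…,n-1}`) with `c|_𝔼 ≠ 0` and `c|_𝕆 ≠ 0`. -/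
def Cindex (n : ℕ) : Type :=
  {c : ℕ → ZMod 2 //
    (∀ j, c j ≠ 0 → j ∈ Icc 2 (n - 1)) ∧
    (∃ j ∈ Icc 2 (n - 1), Even j ∧ c j ≠ 0) ∧
    (∃ j ∈ Icc 2 (n - 1), ¬Even j ∧ c j ≠ 0)}

/-!
Evaluate `ψ_n` at an arbitrary point `t`. On the glove monomial `q_{g(c)} q_{h(c)}` the leaf
coordinates contribute a factor independent of `c`, and the internal edges contribute
`(t(n+1,0) + t(2n,0)) · (t(n+1,1) E_t(c) + t(2n,1) O_t(c))`, where `E_t(c)` only sees `c|_𝔼` and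
`O_t(c)` only sees `c|_𝕆`: at the other positions `j` the two factors `t(n+j,·)` always form the
pair `t(n+j,0) t(n+j,1)`. Hence `ψ_n(f_c)` vanishes at every point, so `f_c ∈ J_n`.

Conversely, write an element of `J_n ∩ G(n,∅)` as `∑ κ(a,b) q_{g(c)} q_{h(c)}` over
`c|_𝔼 = a`, `c|_𝕆 = b`. Evaluating its image at 0/1-points that test the value of `c|_𝔼`
(and kill `t(2n,1)`), or of `c|_𝕆` (and kill `t(n+1,1)`), shows that every row and column sum of
the matrix `κ` vanishes. For such `κ` the sum equals `∑ κ(a,b) f_c`, and `f_c = 0` unless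
`a ≠ 0 ≠ b`. Independence: `q_{g(c)} q_{h(c)}` occurs in `f_c` and in no other `f_{c'}`.
-/

lemma mul_apply_add_one {M : Type*} [CommMonoid M] (f : ZMod 2 → M) (x : ZMod 2) :
    f x * f (x + 1) = f 0 * f 1 := by
  fin_cases x
  · rfl
  · exact mul_comm _ _

theorem sum_smul_rectangle_eq {A B R M : Type*} [Fintype A] [Fintype B] [Semiring R]
    [AddCommGroup M] [Module R M] (κ : A → B → R) (m : A → B → M) (a₀ : A) (b₀ : B)
    (hrow : ∀ a, ∑ b, κ a b = 0) (hcol : ∀ b, ∑ a, κ a b = 0) :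
    ∑ a, ∑ b, κ a b • (m a₀ b₀ - m a b₀ + m a b - m a₀ b) = ∑ a, ∑ b, κ a b • m a b := by
  have h₁ : ∑ a, ∑ b, κ a b • m a₀ b₀ = 0 := by simp [← sum_smul, hrow]
  have h₂ : ∑ a, ∑ b, κ a b • m a b₀ = 0 := by simp [← sum_smul, hrow]
  have h₃ : ∑ a, ∑ b, κ a b • m a₀ b = 0 := by rw [sum_comm]; simp [← sum_smul, hcol]
  simp only [smul_sub, smul_add, sum_sub_distrib, sum_add_distrib, h₁, h₂, h₃]
  abel

section PartialSums

variable {n : ℕ}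

lemma psum1_zero (g : Fin n → ZMod 2) : psum1 g 0 = 0 := by simp [psum1]

lemma psum1_succ (g : Fin n → ZMod 2) {j : ℕ} (hj : j < n) :
    psum1 g (j + 1) = psum1 g j + g ⟨j, hj⟩ := by
  have : (univ.filter fun i : Fin n => (i : ℕ) < j + 1)
      = insert ⟨j, hj⟩ (univ.filter fun i : Fin n => (i : ℕ) < j) := by
    ext i; simp only [mem_filter, mem_univ, true_and, mem_insert, Fin.ext_iff]; omega
  rw [psum1, psum1, this, sum_insert (by simp), add_comm]

lemma psum1_eq_add_psum2 (g : Fin n → ZMod 2) (h0 : 0 < n) {j : ℕ} (hj : 1 ≤ j) :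
    psum1 g j = g ⟨0, h0⟩ + psum2 g j := by
  have : (univ.filter fun i : Fin n => (i : ℕ) < j)
      = insert ⟨0, h0⟩ (univ.filter fun i : Fin n => 0 < (i : ℕ) ∧ (i : ℕ) < j) := by
    ext i; simp only [mem_filter, mem_univ, true_and, mem_insert, Fin.ext_iff]; omega
  rw [psum1, psum2, this, sum_insert (by simp)]

lemma ctil_one (c : ℕ → ZMod 2) : ctil n c 1 = 0 := if_neg (by omega)

lemma ctil_of_mem {c : ℕ → ZMod 2} {j : ℕ} (hj : j ∈ Icc 2 (n - 1)) : ctil n c j = c j :=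
  if_pos (mem_Icc.mp hj)

lemma psum1_eq_of_telescoping (c : ℕ → ZMod 2) (r : ZMod 2) {u : Fin n → ZMod 2}
    (hu : ∀ i : Fin n, u i = r + (ctil n c i + ctil n c (i + 1))) :
    ∀ j ≤ n, psum1 u j = j * r + ctil n c j
  | 0, _ => by rw [psum1_zero, ctil_zero, Nat.cast_zero, zero_mul, add_zero]
  | j + 1, hj => by
    rw [psum1_succ u hj, psum1_eq_of_telescoping c r hu j (by omega), hu]
    push_cast
    linear_combination (ctil n c j) * (CharTwo.two_eq_zero (R := ZMod 2))

lemma psum1_gElem (c : ℕ → ZMod 2) {j : ℕ} (hj : j ≤ n) :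
    psum1 (gElem n c).1 j = ctil n c j := by
  rw [psum1_eq_of_telescoping (u := (gElem n c).1) c 0 (fun i => (zero_add _).symm) j hj,
    mul_zero, zero_add]

lemma psum1_hElem (he : Even n) (c : ℕ → ZMod 2) {j : ℕ} (hj : j ≤ n) :
    psum1 (hElem n he c).1 j = ctil n c j + j := by
  rw [psum1_eq_of_telescoping (u := (hElem n he c).1) c 1 (fun i => rfl) j hj, mul_one, add_comm]

lemma psum2_gElem (c : ℕ → ZMod 2) {j : ℕ} (hj1 : 1 ≤ j) (hj : j ≤ n) :
    psum2 (gElem n c).1 j = ctil n c j := by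
  have h := psum1_eq_add_psum2 (gElem n c).1 (by omega) hj1
  have hg0 : (gElem n c).1 ⟨0, by omega⟩ = 0 := by simp [gElem, ctil_zero, ctil_one]
  rwa [psum1_gElem c hj, hg0, zero_add, eq_comm] at h

lemma psum2_hElem (he : Even n) (c : ℕ → ZMod 2) {j : ℕ} (hj1 : 1 ≤ j) (hj : j ≤ n) :
    psum2 (hElem n he c).1 j = ctil n c j + j + 1 := by
  have h := psum1_eq_add_psum2 (hElem n he c).1 (by omega) hj1
  have hh0 : (hElem n he c).1 ⟨0, by omega⟩ = 1 := by simp [hElem, gElem, ctil_zero, ctil_one]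
  rw [psum1_hElem he c hj, hh0] at h
  linear_combination -h - (CharTwo.two_eq_zero (R := ZMod 2))

end PartialSums

section Evaluation

variable {n : ℕ}

def gloveMonom (n : ℕ) (he : Even n) (c : ℕ → ZMod 2) : Rn n :=
  X (gElem n c) * X (hElem n he c)

lemma fpoly_eq (he : Even n) (c : ℕ → ZMod 2) :
    fpoly n he c = gloveMonom n he 0 - gloveMonom n he (cE c) + gloveMonom n he c
      - gloveMonom n he (cO c) := rfl

def evenFactor (n : ℕ) (t : ℕ × ZMod 2 → ℂ) (c : ℕ → ZMod 2) : ℂ :=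
  ∏ j ∈ Icc 2 (n - 1), t (n + j, c j) * t (n + j, c j + j)

def oddFactor (n : ℕ) (t : ℕ × ZMod 2 → ℂ) (c : ℕ → ZMod 2) : ℂ :=
  ∏ j ∈ Icc 2 (n - 1), t (n + j, c j) * t (n + j, c j + j + 1)

lemma prod_Icc_one_eq {M : Type*} [CommMonoid M] (hn : 2 ≤ n) (f : ℕ → M) :
    ∏ j ∈ Icc 1 (n - 1), f j = f 1 * ∏ j ∈ Icc 2 (n - 1), f j := by
  rw [← prod_insert (s := Icc 2 (n - 1)) (by simp)]
  congr 1; ext j; simp only [mem_Icc, mem_insert]; omega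

lemma prod_Icc_two_eq {M : Type*} [CommMonoid M] (hn : 2 ≤ n) (f : ℕ → M) :
    ∏ j ∈ Icc 2 n, f j = (∏ j ∈ Icc 2 (n - 1), f j) * f n := by
  rw [mul_comm, ← prod_insert (s := Icc 2 (n - 1)) (by simp; omega)]
  congr 1; ext j; simp only [mem_Icc, mem_insert]; omega

lemma aeval_leafMonom_mul (he : Even n) (t : ℕ × ZMod 2 → ℂ) (c : ℕ → ZMod 2) :
    aeval t (leafMonom (gElem n c).1) * aeval t (leafMonom (hElem n he c).1)
      = ∏ i : Fin n, t (i + 1, 0) * t (i + 1, 1) := by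
  simp only [leafMonom, map_prod, aeval_X, ← prod_mul_distrib]
  refine prod_congr rfl fun i _ => ?_
  rw [show (hElem n he c).1 i = (gElem n c).1 i + 1 from add_comm _ _]
  exact mul_apply_add_one (fun x => t (i + 1, x)) _

theorem aeval_ψsunlet_gloveMonom (hn : 2 ≤ n) (he : Even n) (t : ℕ × ZMod 2 → ℂ)
    (c : ℕ → ZMod 2) :
    aeval t (ψsunlet n (gloveMonom n he c)) =
      (∏ i : Fin n, t (i + 1, 0) * t (i + 1, 1)) * (t (n + 1, 0) + t (n + n, 0)) *
        (t (n + 1, 1) * evenFactor n t c + t (n + n, 1) * oddFactor n t c) := by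
  have hIcc : ∀ j ∈ Icc 2 (n - 1), 1 ≤ j ∧ j ≤ n := fun j hj => by
    simp only [mem_Icc] at hj; omega
  have h0g : ∏ j ∈ Icc 1 (n - 1), t (n + j, psum1 (gElem n c).1 j)
      = t (n + 1, 0) * ∏ j ∈ Icc 2 (n - 1), t (n + j, c j) := by
    rw [prod_Icc_one_eq hn, psum1_gElem c (by omega), ctil_one]
    congr 1
    exact prod_congr rfl fun j hj => by rw [psum1_gElem c (hIcc j hj).2, ctil_of_mem hj]
  have h1g : ∏ j ∈ Icc 2 n, t (n + j, psum2 (gElem n c).1 j)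
      = (∏ j ∈ Icc 2 (n - 1), t (n + j, c j)) * t (n + n, 0) := by
    rw [prod_Icc_two_eq hn, psum2_gElem c (by omega) le_rfl, ctil_top]
    congr 1
    exact prod_congr rfl fun j hj => by
      rw [psum2_gElem c (hIcc j hj).1 (hIcc j hj).2, ctil_of_mem hj]
  have h0h : ∏ j ∈ Icc 1 (n - 1), t (n + j, psum1 (hElem n he c).1 j)
      = t (n + 1, 1) * ∏ j ∈ Icc 2 (n - 1), t (n + j, c j + j) := by
    rw [prod_Icc_one_eq hn, psum1_hElem he c (by omega), ctil_one, Nat.cast_one, zero_add]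
    congr 1
    exact prod_congr rfl fun j hj => by rw [psum1_hElem he c (hIcc j hj).2, ctil_of_mem hj]
  have h1h : ∏ j ∈ Icc 2 n, t (n + j, psum2 (hElem n he c).1 j)
      = (∏ j ∈ Icc 2 (n - 1), t (n + j, c j + j + 1)) * t (n + n, 1) := by
    rw [prod_Icc_two_eq hn, psum2_hElem he c (by omega) le_rfl, ctil_top, he.natCast_zmod_two,
      zero_add, zero_add]
    congr 1
    exact prod_congr rfl fun j hj => by
      rw [psum2_hElem he c (hIcc j hj).1 (hIcc j hj).2, ctil_of_mem hj]
  rw [← aeval_leafMonom_mul he t c]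
  simp only [gloveMonom, ψsunlet, tree0Monom, tree1Monom, map_mul, map_add, aeval_X, map_prod]
  rw [h0g, h1g, h0h, h1h, evenFactor, oddFactor, prod_mul_distrib, prod_mul_distrib]
  ring

end Evaluation

section Membership

variable {n : ℕ}

lemma evenFactor_congr (t : ℕ × ZMod 2 → ℂ) {c c' : ℕ → ZMod 2}
    (h : ∀ j, Even j → c j = c' j) : evenFactor n t c = evenFactor n t c' := by
  refine prod_congr rfl fun j _ => ?_
  rcases Nat.even_or_odd j with hj | hj
  · rw [h j hj]
  · rw [hj.natCast_zmod_two]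
    exact (mul_apply_add_one (fun x => t (n + j, x)) _).trans
      (mul_apply_add_one (fun x => t (n + j, x)) _).symm

lemma oddFactor_congr (t : ℕ × ZMod 2 → ℂ) {c c' : ℕ → ZMod 2}
    (h : ∀ j, ¬Even j → c j = c' j) : oddFactor n t c = oddFactor n t c' := by
  refine prod_congr rfl fun j _ => ?_
  by_cases hj : Even j
  · rw [hj.natCast_zmod_two, add_zero, add_zero]
    exact (mul_apply_add_one (fun x => t (n + j, x)) _).trans
      (mul_apply_add_one (fun x => t (n + j, x)) _).symm
  · rw [h j hj]

theorem ψsunlet_fpoly (hn : 2 ≤ n) (he : Even n) (c : ℕ → ZMod 2) :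
    ψsunlet n (fpoly n he c) = 0 := by
  refine MvPolynomial.funext fun t => ?_
  change aeval t _ = aeval t 0
  rw [map_zero, fpoly_eq]
  simp only [map_sub, map_add, aeval_ψsunlet_gloveMonom hn he]
  rw [evenFactor_congr t (c := cE c) (c' := c) fun j hj => if_pos hj,
    evenFactor_congr t (c := cO c) (c' := 0) fun j hj => if_pos hj,
    oddFactor_congr t (c := cE c) (c' := 0) fun j hj => if_neg hj,
    oddFactor_congr t (c := cO c) (c' := c) fun j hj => if_neg hj]
  ring

end Membership

section TestPoints

variable {n : ℕ}

def evenPos (n : ℕ) : Finset ℕ := (Icc 2 (n - 1)).filter Even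

def oddPos (n : ℕ) : Finset ℕ := (Icc 2 (n - 1)).filter fun j => ¬Even j

/-- Products of coordinates of this point are indicators of agreement with `e` at positions
satisfying `P`. -/
def testPoint (n : ℕ) (P : ℕ → Prop) [DecidablePred P] (e : ℕ → ZMod 2) : ℕ × ZMod 2 → ℂ :=
  fun i => if n < i.1 ∧ P (i.1 - n) ∧ i.2 ≠ e (i.1 - n) then 0 else 1

lemma testPoint_of_le (P : ℕ → Prop) [DecidablePred P] (e : ℕ → ZMod 2) {i : ℕ} (hi : i ≤ n)
    (x : ZMod 2) : testPoint n P e (i, x) = 1 :=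
  if_neg fun h => by omega

lemma testPoint_add (P : ℕ → Prop) [DecidablePred P] (e : ℕ → ZMod 2) {j : ℕ} (hj : 1 ≤ j)
    (x : ZMod 2) : testPoint n P e (n + j, x) = if P j ∧ x ≠ e j then 0 else 1 := by
  simp [testPoint, show n < n + j by omega]

theorem aeval_testPoint_even (hn : 2 ≤ n) (he : Even n) {e : ℕ → ZMod 2} (hen : e n = 0)
    (c : ℕ → ZMod 2) :
    aeval (testPoint n Even e) (ψsunlet n (gloveMonom n he c))
      = if ∀ j ∈ evenPos n, c j = e j then 2 else 0 := by
  have hfac : evenFactor n (testPoint n Even e) c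
      = if ∀ j ∈ evenPos n, c j = e j then 1 else 0 := by
    rw [← prod_boole, evenPos, prod_filter, evenFactor]
    refine prod_congr rfl fun j hj => ?_
    rw [testPoint_add _ _ (by simp at hj; omega), testPoint_add _ _ (by simp at hj; omega)]
    by_cases hj : Even j
    · rw [hj.natCast_zmod_two, add_zero]
      by_cases hc : c j = e j <;> simp [hj, hc]
    · simp [hj]
  rw [aeval_ψsunlet_gloveMonom hn he, hfac]
  have hn1 : 1 ≤ n := by omega
  simp [testPoint_of_le, testPoint_add _ _ hn1, testPoint_add _ _ le_rfl, he, hen]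
  split_ifs <;> norm_num

theorem aeval_testPoint_odd (hn : 2 ≤ n) (he : Even n) {e : ℕ → ZMod 2} (he1 : e 1 = 0)
    (c : ℕ → ZMod 2) :
    aeval (testPoint n (fun j => ¬Even j) e) (ψsunlet n (gloveMonom n he c))
      = if ∀ j ∈ oddPos n, c j = e j then 2 else 0 := by
  have hfac : oddFactor n (testPoint n (fun j => ¬Even j) e) c
      = if ∀ j ∈ oddPos n, c j = e j then 1 else 0 := by
    rw [← prod_boole, oddPos, prod_filter, oddFactor]
    refine prod_congr rfl fun j hj => ?_
    rw [testPoint_add _ _ (by simp at hj; omega), testPoint_add _ _ (by simp at hj; omega)]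
    by_cases hj : Even j
    · simp [hj]
    · rw [(Nat.not_even_iff_odd.mp hj).natCast_zmod_two, add_assoc, CharTwo.add_self_eq_zero,
        add_zero]
      by_cases hc : c j = e j <;> simp [hj, hc]
  rw [aeval_ψsunlet_gloveMonom hn he, hfac]
  have hn1 : 1 ≤ n := by omega
  simp [testPoint_of_le, testPoint_add _ _ hn1, testPoint_add _ _ le_rfl,
    Nat.not_odd_iff_even.mpr he, he1]
  split_ifs <;> norm_num

end TestPoints

section Parts

variable {n : ℕ} (a a' : evenPos n → ZMod 2) (b b' : oddPos n → ZMod 2)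

/-- The paper's `c̃` with `c̃|_𝔼 = a` and `c̃|_𝕆 = b`. -/
def joinParts (j : ℕ) : ZMod 2 :=
  if h : j ∈ evenPos n then a ⟨j, h⟩ else if h : j ∈ oddPos n then b ⟨j, h⟩ else 0

lemma joinParts_of_mem_evenPos {j : ℕ} (h : j ∈ evenPos n) : joinParts a b j = a ⟨j, h⟩ :=
  dif_pos h

lemma joinParts_of_mem_oddPos {j : ℕ} (h : j ∈ oddPos n) : joinParts a b j = b ⟨j, h⟩ := by
  have : j ∉ evenPos n := fun h' => (mem_filter.mp h).2 (mem_filter.mp h').2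
  rw [joinParts, dif_neg this, dif_pos h]

lemma joinParts_of_notMem {j : ℕ} (h : j ∉ Icc 2 (n - 1)) : joinParts a b j = 0 := by
  simp [joinParts, evenPos, oddPos, h]

lemma mem_evenPos_or_mem_oddPos_or_notMem (j : ℕ) :
    j ∈ evenPos n ∨ j ∈ oddPos n ∨ j ∉ Icc 2 (n - 1) := by
  simp only [evenPos, oddPos, mem_filter]; tauto

lemma cE_joinParts : cE (joinParts a b) = joinParts a 0 := by
  funext j
  rcases mem_evenPos_or_mem_oddPos_or_notMem (n := n) j with h | h | h
  · simp [cE, joinParts_of_mem_evenPos _ _ h, (mem_filter.mp h).2]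
  · simp [cE, joinParts_of_mem_oddPos _ _ h, (mem_filter.mp h).2]
  · simp [cE, joinParts_of_notMem _ _ h]

lemma cO_joinParts : cO (joinParts a b) = joinParts 0 b := by
  funext j
  rcases mem_evenPos_or_mem_oddPos_or_notMem (n := n) j with h | h | h
  · simp [cO, joinParts_of_mem_evenPos _ _ h, (mem_filter.mp h).2]
  · simp [cO, joinParts_of_mem_oddPos _ _ h, (mem_filter.mp h).2]
  · simp [cO, joinParts_of_notMem _ _ h]

lemma joinParts_zero : joinParts (0 : evenPos n → ZMod 2) 0 = 0 := by
  funext j; simp [joinParts]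

lemma ctil_joinParts : ctil n (joinParts a b) = joinParts a b := by
  funext j
  by_cases h : j ∈ Icc 2 (n - 1)
  · exact ctil_of_mem h
  · rw [joinParts_of_notMem _ _ h]; exact if_neg (by simpa using h)

lemma ctil_eq_joinParts (c : ℕ → ZMod 2) :
    ctil n c = joinParts (fun j : evenPos n => c j) (fun j : oddPos n => c j) := by
  funext j
  rcases mem_evenPos_or_mem_oddPos_or_notMem (n := n) j with h | h | h
  · rw [joinParts_of_mem_evenPos _ _ h, ctil_of_mem (mem_filter.mp h).1]
  · rw [joinParts_of_mem_oddPos _ _ h, ctil_of_mem (mem_filter.mp h).1]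
  · rw [joinParts_of_notMem _ _ h]; exact if_neg (by simpa using h)

lemma joinParts_agree_evenPos_iff :
    (∀ j ∈ evenPos n, joinParts a b j = joinParts a' b' j) ↔ a = a' := by
  refine ⟨fun h => funext fun j => ?_, fun h j hj => ?_⟩
  · simpa [joinParts_of_mem_evenPos _ _ j.2] using h j j.2
  · simp [joinParts_of_mem_evenPos _ _ hj, h]

lemma joinParts_agree_oddPos_iff :
    (∀ j ∈ oddPos n, joinParts a b j = joinParts a' b' j) ↔ b = b' := by
  refine ⟨fun h => funext fun j => ?_, fun h j hj => ?_⟩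
  · simpa [joinParts_of_mem_oddPos _ _ j.2] using h j j.2
  · simp [joinParts_of_mem_oddPos _ _ hj, h]

end Parts

section Glove

variable {n : ℕ}

lemma psum1_self (g : Gn n) : psum1 g.1 n = 0 := by
  rw [psum1, filter_true_of_mem fun i _ => i.isLt]
  exact g.2

lemma exists_gElem_eq (h0 : 0 < n) (g : Gn n) (hg : g.1 ⟨0, h0⟩ = 0) :
    ∃ c, gElem n c = g := by
  refine ⟨fun j => psum1 g.1 j, Subtype.ext (funext fun i => ?_)⟩
  have hctil : ∀ j ≤ n, ctil n (fun j => psum1 g.1 j) j = psum1 g.1 j := by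
    intro j hj
    by_cases h : 2 ≤ j ∧ j ≤ n - 1
    · exact if_pos h
    rw [ctil, if_neg h]
    rcases (by omega : j = 0 ∨ j = 1 ∨ j = n) with rfl | rfl | rfl
    · exact (psum1_zero _).symm
    · rw [psum1_succ _ h0, psum1_zero, hg, add_zero]
    · exact (psum1_self g).symm
  change ctil n _ i + ctil n _ (i + 1) = g.1 i
  rw [hctil i i.isLt.le, hctil (i + 1) i.isLt, psum1_succ _ i.isLt, CharTwo.add_cancel_left]

lemma gElem_congr {c d : ℕ → ZMod 2} (h : ctil n c = ctil n d) : gElem n c = gElem n d :=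
  Subtype.ext <| funext fun i => by simp only [gElem, h]

lemma hElem_congr (he : Even n) {c d : ℕ → ZMod 2} (h : ctil n c = ctil n d) :
    hElem n he c = hElem n he d :=
  Subtype.ext <| funext fun i => by simp only [hElem, gElem_congr h]

lemma gloveMonom_congr (he : Even n) {c d : ℕ → ZMod 2} (h : ctil n c = ctil n d) :
    gloveMonom n he c = gloveMonom n he d := by
  rw [gloveMonom, gloveMonom, gElem_congr h, hElem_congr he h]

lemma glovePair_gElem_hElem (he : Even n) (c : ℕ → ZMod 2) :
    GlovePair (∅ : Finset (Fin n)) 0 (gElem n c) (hElem n he c) := by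
  refine ⟨by simp, by simp, fun i _ => ?_⟩
  change (gElem n c).1 i + (1 + (gElem n c).1 i) = 1
  rw [add_left_comm, CharTwo.add_self_eq_zero, add_zero]

lemma gloveMonom_mem_glove (he : Even n) (c : ℕ → ZMod 2) :
    gloveMonom n he c ∈ glove (∅ : Finset (Fin n)) 0 :=
  Submodule.subset_span ⟨_, _, glovePair_gElem_hElem he c, rfl⟩

lemma fpoly_mem_glove (he : Even n) (c : ℕ → ZMod 2) :
    fpoly n he c ∈ glove (∅ : Finset (Fin n)) 0 := by
  rw [fpoly_eq]
  exact sub_mem (add_mem (sub_mem (gloveMonom_mem_glove he _) (gloveMonom_mem_glove he _))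
    (gloveMonom_mem_glove he _)) (gloveMonom_mem_glove he _)

lemma exists_gloveMonom_joinParts_eq (h0 : 0 < n) (he : Even n) {g h : Gn n}
    (hgh : ∀ i, g.1 i + h.1 i = 1) (hg : g.1 ⟨0, h0⟩ = 0) :
    ∃ ab : (evenPos n → ZMod 2) × (oddPos n → ZMod 2),
      gloveMonom n he (joinParts ab.1 ab.2) = X g * X h := by
  obtain ⟨c, rfl⟩ := exists_gElem_eq h0 g hg
  obtain rfl : h = hElem n he c :=
    Subtype.ext (funext fun i => CharTwo.add_eq_iff_eq_add.mp ((add_comm _ _).trans (hgh i)))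
  exact ⟨(fun j => c j, fun j => c j),
    gloveMonom_congr he (by rw [ctil_joinParts, ctil_eq_joinParts])⟩

theorem glove_eq_span_gloveMonom (h0 : 0 < n) (he : Even n) :
    glove (∅ : Finset (Fin n)) 0 = Submodule.span ℂ
      (Set.range fun ab : (evenPos n → ZMod 2) × (oddPos n → ZMod 2) =>
        gloveMonom n he (joinParts ab.1 ab.2)) := by
  refine le_antisymm (Submodule.span_le.mpr ?_) (Submodule.span_le.mpr ?_)
  · rintro _ ⟨g, h, ⟨-, -, hgh⟩, rfl⟩
    replace hgh : ∀ i, g.1 i + h.1 i = 1 := fun i => hgh i (notMem_empty i)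
    obtain hg | hg : g.1 ⟨0, h0⟩ = 0 ∨ g.1 ⟨0, h0⟩ = 1 := by
      generalize g.1 ⟨0, h0⟩ = x; revert x; decide
    · exact Submodule.subset_span (exists_gloveMonom_joinParts_eq h0 he hgh hg)
    · have hh : h.1 ⟨0, h0⟩ = 0 := by
        rw [CharTwo.add_eq_iff_eq_add.mp ((add_comm _ _).trans (hgh _)), hg]
        rfl
      rw [mul_comm]
      exact Submodule.subset_span
        (exists_gloveMonom_joinParts_eq h0 he (fun i => (add_comm _ _).trans (hgh i)) hh)
  · rintro _ ⟨ab, rfl⟩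
    exact gloveMonom_mem_glove he _

end Glove

section Span

variable {n : ℕ}

lemma sum_row_eq_zero_of_ψsunlet_eq_zero (hn : 2 ≤ n) (he : Even n)
    (κ : (evenPos n → ZMod 2) → (oddPos n → ZMod 2) → ℂ)
    (hker : ψsunlet n (∑ a, ∑ b, κ a b • gloveMonom n he (joinParts a b)) = 0)
    (a₀ : evenPos n → ZMod 2) : ∑ b, κ a₀ b = 0 := by
  have h := congrArg (aeval (testPoint n Even (joinParts a₀ 0))) hker
  have hen : joinParts a₀ 0 n = 0 := joinParts_of_notMem _ _ (by simp; omega)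
  simp only [map_sum, map_smul, map_zero, aeval_testPoint_even hn he hen,
    joinParts_agree_evenPos_iff, smul_eq_mul, mul_ite, mul_zero] at h
  simpa [← sum_mul] using h

lemma sum_col_eq_zero_of_ψsunlet_eq_zero (hn : 2 ≤ n) (he : Even n)
    (κ : (evenPos n → ZMod 2) → (oddPos n → ZMod 2) → ℂ)
    (hker : ψsunlet n (∑ a, ∑ b, κ a b • gloveMonom n he (joinParts a b)) = 0)
    (b₀ : oddPos n → ZMod 2) : ∑ a, κ a b₀ = 0 := by
  have h := congrArg (aeval (testPoint n (fun j => ¬Even j) (joinParts 0 b₀))) hker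
  have he1 : joinParts 0 b₀ 1 = 0 := joinParts_of_notMem _ _ (by simp)
  simp only [map_sum, map_smul, map_zero, aeval_testPoint_odd hn he he1,
    joinParts_agree_oddPos_iff, smul_eq_mul, mul_ite, mul_zero] at h
  simpa [← sum_mul] using h

lemma fpoly_joinParts (he : Even n) (a : evenPos n → ZMod 2) (b : oddPos n → ZMod 2) :
    fpoly n he (joinParts a b) = gloveMonom n he (joinParts (n := n) 0 0)
      - gloveMonom n he (joinParts a 0)
      + gloveMonom n he (joinParts a b) - gloveMonom n he (joinParts 0 b) := by
  rw [fpoly_eq, cE_joinParts, cO_joinParts, joinParts_zero]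

lemma fpoly_joinParts_mem_span (he : Even n) (a : evenPos n → ZMod 2) (b : oddPos n → ZMod 2) :
    fpoly n he (joinParts a b) ∈
      Submodule.span ℂ (Set.range fun c : Cindex n => fpoly n he c.1) := by
  by_cases ha : a = 0
  · rw [fpoly_joinParts, ha, sub_self, zero_add, sub_self]
    exact zero_mem _
  by_cases hb : b = 0
  · rw [fpoly_joinParts, hb, sub_add_cancel, sub_self]
    exact zero_mem _
  obtain ⟨i, hi⟩ := Function.ne_iff.mp ha
  obtain ⟨k, hk⟩ := Function.ne_iff.mp hb
  refine Submodule.subset_span ⟨⟨joinParts a b, fun j hj => ?_,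
    ⟨i, (mem_filter.mp i.2).1, (mem_filter.mp i.2).2, ?_⟩,
    ⟨k, (mem_filter.mp k.2).1, (mem_filter.mp k.2).2, ?_⟩⟩, rfl⟩
  · by_contra h
    exact hj (joinParts_of_notMem _ _ h)
  · rwa [joinParts_of_mem_evenPos _ _ i.2]
  · rwa [joinParts_of_mem_oddPos _ _ k.2]

theorem mem_span_fpoly_of_mem_glove (hn : 2 ≤ n) (he : Even n) {p : Rn n}
    (hJ : p ∈ Jsunlet n) (hG : p ∈ glove (∅ : Finset (Fin n)) 0) :
    p ∈ Submodule.span ℂ (Set.range fun c : Cindex n => fpoly n he c.1) := by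
  rw [glove_eq_span_gloveMonom (by omega) he, Submodule.mem_span_range_iff_exists_fun] at hG
  obtain ⟨κ, rfl⟩ := hG
  simp only [Fintype.sum_prod_type] at hJ ⊢
  have hker := RingHom.mem_ker.mp hJ
  rw [← sum_smul_rectangle_eq (fun a b => κ (a, b)) (fun a b => gloveMonom n he (joinParts a b))
    0 0 (sum_row_eq_zero_of_ψsunlet_eq_zero hn he _ hker)
    (sum_col_eq_zero_of_ψsunlet_eq_zero hn he _ hker)]
  refine sum_mem fun a _ => sum_mem fun b _ => Submodule.smul_mem _ _ ?_
  rw [← fpoly_joinParts]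
  exact fpoly_joinParts_mem_span he a b

end Span

section Independence

variable {n : ℕ}

def gloveExp (n : ℕ) (he : Even n) (c : ℕ → ZMod 2) : Gn n →₀ ℕ :=
  Finsupp.single (gElem n c) 1 + Finsupp.single (hElem n he c) 1

lemma gloveMonom_eq_monomial (he : Even n) (c : ℕ → ZMod 2) :
    gloveMonom n he c = monomial (gloveExp n he c) 1 := by
  rw [gloveMonom, gloveExp, X, X, monomial_mul, one_mul]

lemma gElem_ne_hElem (h0 : 0 < n) (he : Even n) (c d : ℕ → ZMod 2) :
    gElem n c ≠ hElem n he d := fun h => by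
  have := congrArg (fun g : Gn n => g.1 ⟨0, h0⟩) h
  simp [hElem, gElem, ctil_zero, ctil_one] at this

lemma gElem_eq_gElem_iff {c d : ℕ → ZMod 2} : gElem n c = gElem n d ↔ ctil n c = ctil n d := by
  refine ⟨fun h => funext fun j => ?_, gElem_congr⟩
  by_cases hj : j ≤ n
  · rw [← psum1_gElem c hj, ← psum1_gElem d hj, h]
  · rw [ctil, ctil, if_neg (by omega), if_neg (by omega)]

open scoped Classical in
lemma coeff_gloveExp_gloveMonom (h0 : 0 < n) (he : Even n) (c d : ℕ → ZMod 2) :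
    coeff (gloveExp n he c) (gloveMonom n he d) = if ctil n d = ctil n c then 1 else 0 := by
  rw [gloveMonom_eq_monomial, coeff_monomial]
  refine if_congr ?_ rfl rfl
  rw [gloveExp, gloveExp, Finsupp.single_add_single_eq_single_add_single one_ne_zero one_ne_zero,
    ← gElem_eq_gElem_iff]
  refine ⟨?_, fun h => Or.inl ⟨h, hElem_congr he (gElem_eq_gElem_iff.mp h)⟩⟩
  rintro (⟨h, -⟩ | ⟨-, h, -⟩ | ⟨h, -⟩)
  · exact h
  · exact absurd h (gElem_ne_hElem h0 he _ _)
  · exact absurd h (by norm_num)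

lemma ctil_eq_self {c : ℕ → ZMod 2} (hc : ∀ j, c j ≠ 0 → j ∈ Icc 2 (n - 1)) : ctil n c = c :=
  funext fun j => by
    by_cases h : j ∈ Icc 2 (n - 1)
    · exact ctil_of_mem h
    · rw [ctil, if_neg (by simpa using h)]
      by_contra h'
      exact h (hc j (Ne.symm h'))

open scoped Classical in
lemma coeff_gloveExp_fpoly (h0 : 0 < n) (he : Even n) (c c' : Cindex n) :
    coeff (gloveExp n he c.1) (fpoly n he c'.1) = if c' = c then 1 else 0 := by
  obtain ⟨j, hj, hje, hcj⟩ := c.2.2.1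
  obtain ⟨k, hk, hko, hck⟩ := c.2.2.2
  have h₁ : ctil n 0 ≠ c.1 := fun h => hcj (by rw [← h, ctil_of_mem hj]; rfl)
  have h₂ : ctil n (cE c'.1) ≠ c.1 := fun h => hck (by rw [← h, ctil_of_mem hk]; simp [cE, hko])
  have h₃ : ctil n (cO c'.1) ≠ c.1 := fun h => hcj (by rw [← h, ctil_of_mem hj]; simp [cO, hje])
  rw [fpoly_eq, coeff_sub, coeff_add, coeff_sub]
  simp only [coeff_gloveExp_gloveMonom h0 he, ctil_eq_self c.2.1, ctil_eq_self c'.2.1, if_neg h₁,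
    if_neg h₂, if_neg h₃]
  rw [sub_zero, sub_self, zero_add]
  exact if_congr Subtype.ext_iff.symm rfl rfl

theorem linearIndependent_fpoly (h0 : 0 < n) (he : Even n) :
    LinearIndependent ℂ (fun c : Cindex n => fpoly n he c.1) := by
  classical
  let coeffs : Rn n →ₗ[ℂ] Cindex n → ℂ :=
    LinearMap.pi fun c : Cindex n => lcoeff ℂ (gloveExp n he c.1)
  have hcoeffs : coeffs ∘ (fun c : Cindex n => fpoly n he c.1) = fun c' => Pi.single c' 1 := by
    funext c' c
    simp [coeffs, coeff_gloveExp_fpoly h0 he, Pi.single_apply, eq_comm]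
  exact LinearIndependent.of_comp coeffs (hcoeffs ▸ Pi.linearIndependent_single_one _ _)

end Independence

/-- Theorem 4.8: each `f_c` (with `c|_𝔼 ≠ 0 ≠ c|_𝕆`) lies in `J_n ∩ G(n,∅)`, and the
collection `B_n = {f_c}` is a `ℂ`-vector space basis of `J_n ∩ G(n,∅)`. -/
theorem fpoly_basis (n : ℕ) (hn : 4 ≤ n) (he : Even n) :
    (∀ c : ℕ → ZMod 2,
        (∃ j ∈ Icc 2 (n - 1), Even j ∧ c j ≠ 0) →
        (∃ j ∈ Icc 2 (n - 1), ¬Even j ∧ c j ≠ 0) →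
        fpoly n he c ∈ Submodule.restrictScalars ℂ (Jsunlet n) ⊓ glove (∅ : Finset (Fin n)) 0) ∧
    LinearIndependent ℂ (fun c : Cindex n => fpoly n he c.1) ∧
    Submodule.span ℂ (Set.range fun c : Cindex n => fpoly n he c.1) =
      Submodule.restrictScalars ℂ (Jsunlet n) ⊓ glove (∅ : Finset (Fin n)) 0 := by
  have hmem : ∀ c, fpoly n he c ∈
      Submodule.restrictScalars ℂ (Jsunlet n) ⊓ glove (∅ : Finset (Fin n)) 0 := fun c =>
    ⟨RingHom.mem_ker.mpr (ψsunlet_fpoly (by omega) he c), fpoly_mem_glove he c⟩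
  refine ⟨fun c _ _ => hmem c, linearIndependent_fpoly (by omega) he, le_antisymm ?_ ?_⟩
  · exact Submodule.span_le.mpr (Set.range_subset_iff.mpr fun c => hmem c.1)
  · rintro p ⟨hJ, hG⟩
    exact mem_span_fpoly_of_mem_glove (by omega) he hJ hG
end
end

section
/- Let n ≥ 4, let E be a finite set and A : E → subsets of {1,…,n} any family of subsets (for a phylogenetic tree T these are the splits A_e associated to its edges). Let ψ : R_n → ℂ[a^e_g : e ∈ E, g ∈ ℤ/2ℤ] be the ℂ-algebra homomorphism determined by ψ(q_g) = ∏_{e∈E} a^e_{Σ_{i∈A(e)} g_i}. Fix F ⊆ {1,…,n} and a ∈ (ℤ/2ℤ)^F, set 𝔼_T = {e ∈ E : |A(e) ∖ F| is even}, and let M_{𝔼_T} : G(n,F,a) → ℂ^{(ℤ/2ℤ)^{𝔼_T}} be the ℂ-linear map sending each spanning glove monomial q_g q_h (with g the lexicographically smaller index) to the standard basis vector indexed by (Σ_{i∈A(e)} g_i)_{e∈𝔼_T}. Then for every f ∈ G(n,F,a), ψ(f) = 0 if and only if M_{𝔼_T}(f) = 0. -/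
/-! Every spanning monomial `q_g q_h` of the glove, `g` its smaller index, is sent by `ψ` to a
monomial whose `e`-th factor is `a^e_w a^e_{w + |A_e ∖ F|}` with `w = ∑_{i ∈ A_e} g_i`. Its
exponent remembers `w` exactly on the edges where `|A_e ∖ F|` is even, and forgets it on the
others (the factor is then `a^e_0 a^e_1`). So `ψ(f) = 0` says precisely that, for each colouring
of the even edges, the coefficients of the monomials carrying that colouring sum to zero. -/

noncomputable section

open MvPolynomial Finset

/-- The parameterization of a "tree" given by an arbitrary family of splits
`A : E → Finset (Fin n)`: `ψ(q_g) = ∏_{e ∈ E} a^e_{∑_{i ∈ A e} g_i}`. -/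
def ψsplits {n : ℕ} (E : Type) [Fintype E] (A : E → Finset (Fin n)) :
    Rn n →ₐ[ℂ] MvPolynomial (E × ZMod 2) ℂ :=
  aeval fun g => ∏ e : E, X (e, ∑ i ∈ A e, g.1 i)

lemma MvPolynomial.sum_smul_monomial_one_eq_zero_iff {ι σ R : Type*} [CommSemiring R]
    [DecidableEq σ] (s : Finset ι) (c : ι → R) (d : ι → σ →₀ ℕ) :
    ∑ i ∈ s, c i • monomial (d i) (1 : R) = 0 ↔
      ∀ m, ∑ i ∈ s, (if d i = m then c i else 0) = 0 := by
  simp only [MvPolynomial.ext_iff, coeff_sum, coeff_smul, coeff_monomial, smul_eq_mul,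
    mul_ite, mul_one, mul_zero, coeff_zero]

lemma Finset.forall_sum_ite_comp_eq_zero_iff {ι α β M : Type*} [AddCommMonoid M]
    [DecidableEq β] (s : Finset ι) (c : ι → M) (w : ι → α) (D : α → β) :
    (∀ m, ∑ i ∈ s, (if D (w i) = m then c i else 0) = 0) ↔
      ∀ v, ∑ i ∈ s, (if D (w i) = D v then c i else 0) = 0 := by
  refine ⟨fun h v => h (D v), fun h m => ?_⟩
  by_cases hm : ∃ i ∈ s, D (w i) = m
  · obtain ⟨i, -, rfl⟩ := hm
    exact h (w i)
  · exact Finset.sum_eq_zero fun i hi => if_neg fun hi' => hm ⟨i, hi, hi'⟩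

section PairExponent

variable {E : Type*} [Fintype E]

/-- The exponent of `∏_e a^e_{w e} a^e_{w e + ε e}`. -/
def pairExponent (ε w : E → ZMod 2) : E × ZMod 2 →₀ ℕ :=
  ∑ e, (Finsupp.single (e, w e) 1 + Finsupp.single (e, w e + ε e) 1)

lemma pairExponent_apply (ε w : E → ZMod 2) (e : E) (t : ZMod 2) :
    pairExponent ε w (e, t) = if ε e = 0 then (if t = w e then 2 else 0) else 1 := by
  classical
  have hbits : ∀ x y t : ZMod 2, ((if x = t then 1 else 0) + (if x + y = t then 1 else 0) : ℕ) =
      if y = 0 then (if t = x then 2 else 0) else 1 := by decide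
  rw [pairExponent, Finsupp.finsetSum_apply, Fintype.sum_eq_single e fun e' he' => by
    simp [he']]
  simpa only [Finsupp.add_apply, Finsupp.single_apply, Prod.mk.injEq, true_and] using
    hbits (w e) (ε e) t

lemma pairExponent_eq_iff (ε w w' : E → ZMod 2) :
    pairExponent ε w = pairExponent ε w' ↔ ∀ e, ε e = 0 → w e = w' e := by
  refine ⟨fun h e he => ?_, fun h => Finsupp.ext fun ⟨e, t⟩ => ?_⟩
  · by_contra hne
    simpa [pairExponent_apply, he, hne] using congr($h (e, w e))
  · simp only [pairExponent_apply]
    split_ifs with he <;> simp_all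

end PairExponent

variable {n : ℕ} {F : Finset (Fin n)} {a : Fin n → ZMod 2} {g h : Gn n}

lemma GlovePair.val_apply (H : GlovePair F a g h) (i : Fin n) :
    h.1 i = g.1 i + if i ∈ F then 0 else 1 := by
  obtain ⟨hg, hh, hgh⟩ := H
  split_ifs with hi
  · rw [hg i hi, hh i hi, add_zero]
  · have hbits : ∀ x y : ZMod 2, x + y = 1 → y = x + 1 := by decide
    exact hbits _ _ (hgh i hi)

lemma GlovePair.unique {h' : Gn n} (H : GlovePair F a g h) (H' : GlovePair F a g h') :
    h = h' :=
  Subtype.ext <| funext fun i => by rw [H.val_apply, H'.val_apply]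

lemma GlovePair.sum_val_eq {E : Type*} (H : GlovePair F a g h) (A : E → Finset (Fin n)) (e : E) :
    ∑ i ∈ A e, h.1 i = ∑ i ∈ A e, g.1 i + ((A e \ F).card : ZMod 2) := by
  simp only [H.val_apply, Finset.sum_add_distrib, Finset.sdiff_eq_filter, Finset.sum_ite,
    Finset.sum_const_zero, zero_add, Finset.sum_const, nsmul_one]

variable {E : Type} [Fintype E] (A : E → Finset (Fin n))

def edgeColoring (g : Gn n) (e : E) : ZMod 2 := ∑ i ∈ A e, g.1 i

/-- Edge `e` lies in `𝔼_T` iff this vanishes. -/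
def splitParity (F : Finset (Fin n)) (e : E) : ZMod 2 := ((A e \ F).card : ZMod 2)

lemma ψsplits_X_mul_X (H : GlovePair F a g h) :
    ψsplits E A (X g * X h) =
      monomial (pairExponent (splitParity A F) (edgeColoring A g)) 1 := by
  have hprod : ∀ w : E → ZMod 2, ∏ e, (X (e, w e) : MvPolynomial (E × ZMod 2) ℂ) =
      monomial (∑ e, Finsupp.single (e, w e) 1) 1 := fun w => by
    rw [monomial_sum_one]; rfl
  rw [pairExponent, Finset.sum_add_distrib, ← one_mul (1 : ℂ), ← monomial_mul, ← hprod, ← hprod]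
  simp only [ψsplits, map_mul, aeval_X, edgeColoring, splitParity, H.sum_val_eq]

lemma ψsplits_gloveElt (c : Gn n → ℂ) :
    ψsplits E A (gloveElt F a c) =
      ∑ g ∈ univ.filter (Lmem F a),
        c g • monomial (pairExponent (splitParity A F) (edgeColoring A g)) 1 := by
  have hterm : ∀ g h : Gn n, ψsplits E A
      ((if GlovePair F a g h ∧ lexLe g.1 h.1 then c g else 0) • (X g * X h : Rn n)) =
      (if GlovePair F a g h ∧ lexLe g.1 h.1 then c g else 0) •
        monomial (pairExponent (splitParity A F) (edgeColoring A g)) 1 := by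
    intro g h
    split_ifs with hgh
    · rw [map_smul, ψsplits_X_mul_X A hgh.1]
    · simp only [zero_smul, map_zero]
  simp only [gloveElt, map_sum, hterm, ← Finset.sum_smul, Finset.sum_filter]
  refine Finset.sum_congr rfl fun g _ => ?_
  rw [Fintype.sum_ite_eq_ite_exists _ fun h h' hh hh' => hh.1.unique hh'.1, ite_smul,
    zero_smul]
  rfl

theorem tree_glove_kernel_general (n : ℕ) (E : Type) [Fintype E]
    (A : E → Finset (Fin n)) (F : Finset (Fin n)) (a : Fin n → ZMod 2) (c : Gn n → ℂ) :
    ψsplits E A (gloveElt F a c) = 0 ↔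
      ∀ v : E → ZMod 2,
        (∑ g : Gn n,
          if Lmem F a g ∧ ∀ e : E, Even ((A e \ F).card) → ∑ i ∈ A e, g.1 i = v e then
            c g else 0) = 0 := by
  classical
  rw [ψsplits_gloveElt, sum_smul_monomial_one_eq_zero_iff, forall_sum_ite_comp_eq_zero_iff]
  simp only [pairExponent_eq_iff, splitParity, ZMod.natCast_eq_zero_iff_even, edgeColoring,
    Finset.sum_filter, ite_and]

/-- Theorem 4.11: for any family of splits `A` and any element `f` of the glove
`G(n,F,a)`, `ψ(f) = 0` iff `M_{𝔼_T}(f) = 0`, where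
`𝔼_T = {e : |A_e ∖ F| even}`. -/
theorem tree_glove_kernel (n : ℕ) (hn : 4 ≤ n) (E : Type) [Fintype E]
    (A : E → Finset (Fin n)) (F : Finset (Fin n)) (a : Fin n → ZMod 2) (c : Gn n → ℂ) :
    ψsplits E A (gloveElt F a c) = 0 ↔
      ∀ v : E → ZMod 2,
        (∑ g : Gn n,
          if Lmem F a g ∧ ∀ e : E, Even ((A e \ F).card) → ∑ i ∈ A e, g.1 i = v e then
            c g else 0) = 0 :=
  tree_glove_kernel_general n E A F a c
end
end
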